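/- arXiv:1001.0133 — 9 statements merged into one kernel-verified Lean document; each statement's English description precedes it below -/
import Mathlib

section
/- Let S be an invertible n×n, U an m×n, and V an n×m complex matrix, let ε ∈ {1, −1}, and suppose the n×n matrix K satisfies S⁻¹ K − K S* = V U. For x ∈ ℤ and t ∈ ℝ set Ξ(x,t) = Sˣ · exp(−i t (S + S⁻¹ − 2I)), and assume that Ξ(x,t)*⁻¹ − ε K* Ξ(x,t) K and Ξ(x,t)⁻¹ − ε K Ξ(x,t)* K* are invertible for all (x,t) ∈ ℤ×ℝ. Then q = U (Ξ*⁻¹ − ε K* Ξ K)⁻¹ V* and p = ε U Ξ* K* (Ξ⁻¹ − ε K Ξ* K*)⁻¹ V satisfy the m×m matrix Ablowitz–Ladik equations: i q̇ + q⁺ − 2q + q⁻ − ε (q⁺ q* q + q q* q⁻) = 0 and p⁺ − p = −ε q⁺ q*. -/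
open Matrix

attribute [local instance] Matrix.normedAddCommGroup Matrix.normedSpace

/-- Entrywise complex conjugate of a matrix. -/
def mconj {a b : Type*} (A : Matrix a b ℂ) : Matrix a b ℂ :=
  A.map (starRingEnd ℂ)

/-- Partial derivative with respect to the continuous (time) variable of a function
of a discrete variable `x : ℤ` and `t : ℝ`. -/
noncomputable def pdt' {α : Type*} [NormedAddCommGroup α] [NormedSpace ℝ α]
    (f : ℤ → ℝ → α) : ℤ → ℝ → α :=
  fun x t => deriv (fun s => f x s) t

/-!
Write `T = S*`, `L = K*`, `Θ = Ξ*` and `𝔄 = Θ⁻¹ - ε L Ξ K`, so that `q = U 𝔄⁻¹ V*`; since `ε` is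
real, `q* = U* 𝔅⁻¹ V` with `𝔅 = Ξ⁻¹ - ε K Θ L`, the same construction with the roles of `(Ξ, K)`
and `(Θ, L)` exchanged. The Sylvester equation and its conjugate turn the shift `x ↦ x + 1` into a
rank-`m` update of `𝔄`, in two forms:
`𝔄(x+1) = T⁻¹ 𝔄(x) + ε V* U* Ξ(x) K` and `𝔄(x+1) T = 𝔄(x) + ε L Ξ(x+1) V U`.
Together with the Woodbury formula for `𝔅⁻¹` they give
`𝔄⁻¹ 𝔄(x+1) 𝔄⁻¹ = 𝔄(x-1)⁻¹ - ε 𝔄⁻¹ V* U* 𝔅⁻¹ V U 𝔄(x-1)⁻¹` and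
`𝔄⁻¹ 𝔄(x-1) 𝔄⁻¹ = 𝔄(x+1)⁻¹ - ε 𝔄(x+1)⁻¹ V* U* 𝔅⁻¹ V U 𝔄⁻¹`.
In time, `Ξ` and `Θ⁻¹` are plane waves solving `i ∂ₜF = F(x+1) + F(x-1) - 2F`, hence so is `𝔄`,
and `i ∂ₜq = -U 𝔄⁻¹ (𝔄(x+1) + 𝔄(x-1) - 2𝔄) 𝔄⁻¹ V*`; the two identities turn this into the first
equation. Since `Θ L 𝔅⁻¹ = 𝔄⁻¹ L Ξ`, the second equation is the telescoping identity
`𝔄(x+1)⁻¹ L Ξ(x+1) - 𝔄⁻¹ L Ξ = -𝔄(x+1)⁻¹ V* U* 𝔅⁻¹`.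
-/

section Dressing

variable {R : Type*} [CommRing R] {ι κ : Type*} [Fintype ι] [DecidableEq ι] [Fintype κ]
  {S T K L : Matrix ι ι R} {U Y : Matrix κ ι R} {V W : Matrix ι κ R} {ε : R}
  {Ξ Θ : ℤ → Matrix ι ι R}

noncomputable def dressing (K L : Matrix ι ι R) (ε : R) (Ξ Θ : ℤ → Matrix ι ι R) (x : ℤ) :
    Matrix ι ι R :=
  (Θ x)⁻¹ - ε • (L * Ξ x * K)

local notation "𝔄" => dressing K L ε Ξ Θ
local notation "𝔅" => dressing L K ε Θ Ξ

theorem dressing_inv_eq {x : ℤ} (hΘ : IsUnit (Θ x)) (hA : IsUnit (𝔄 x)) :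
    (𝔄 x)⁻¹ = Θ x + ε • (Θ x * L * Ξ x * K * (𝔄 x)⁻¹) := by
  have h : ((Θ x)⁻¹ - ε • (L * Ξ x * K)) * (𝔄 x)⁻¹ = 1 :=
    Matrix.mul_nonsing_inv _ ((isUnit_iff_isUnit_det _).mp hA)
  rw [Matrix.sub_mul, Matrix.smul_mul, sub_eq_iff_eq_add] at h
  calc (𝔄 x)⁻¹ = Θ x * ((Θ x)⁻¹ * (𝔄 x)⁻¹) :=
        (mul_nonsing_inv_cancel_left _ _ ((isUnit_iff_isUnit_det _).mp hΘ)).symm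
    _ = _ := by
        rw [h]; simp only [Matrix.mul_add, Matrix.mul_one, Matrix.mul_smul, Matrix.mul_assoc]

theorem dressing_swap_inv {x : ℤ} (hΞ : IsUnit (Ξ x)) (hΘ : IsUnit (Θ x)) (hA : IsUnit (𝔄 x)) :
    (𝔅 x)⁻¹ = Ξ x + ε • (Ξ x * K * (𝔄 x)⁻¹ * L * Ξ x) := by
  apply inv_eq_right_inv
  have h := congrArg (fun M => ε • (K * M * L * Ξ x)) (dressing_inv_eq hΘ hA)
  have hΞ' := (isUnit_iff_isUnit_det _).mp hΞ
  simp only [Matrix.mul_add, Matrix.add_mul, Matrix.mul_smul, Matrix.smul_mul, smul_add,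
    Matrix.mul_assoc] at h
  change ((Ξ x)⁻¹ - ε • (K * Θ x * L)) * _ = 1
  simp only [Matrix.sub_mul, Matrix.mul_add, Matrix.mul_smul, Matrix.smul_mul, Matrix.mul_assoc,
    nonsing_inv_mul _ hΞ', nonsing_inv_mul_cancel_left _ _ hΞ']
  linear_combination (norm := module) h

theorem mul_mul_dressing_swap_inv {x : ℤ} (hΞ : IsUnit (Ξ x)) (hΘ : IsUnit (Θ x))
    (hA : IsUnit (𝔄 x)) : Θ x * L * (𝔅 x)⁻¹ = (𝔄 x)⁻¹ * L * Ξ x := by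
  rw [dressing_swap_inv hΞ hΘ hA]
  nth_rw 2 [dressing_inv_eq hΘ hA]
  simp only [Matrix.mul_add, Matrix.add_mul, Matrix.mul_smul, Matrix.smul_mul, Matrix.mul_assoc]

theorem dressing_add_one (hSyl : T⁻¹ * L - L * S = W * Y) (hΞ : ∀ y, Ξ (y + 1) = S * Ξ y)
    (hΘ : ∀ y, Θ (y + 1) = Θ y * T) (x : ℤ) :
    𝔄 (x + 1) = T⁻¹ * 𝔄 x + ε • (W * Y * Ξ x * K) := by
  have hLS : L * S = T⁻¹ * L - W * Y := by rw [← hSyl]; abel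
  change (Θ (x + 1))⁻¹ - ε • (L * Ξ (x + 1) * K) = T⁻¹ * ((Θ x)⁻¹ - ε • (L * Ξ x * K)) + _
  rw [hΞ, hΘ, Matrix.mul_inv_rev, ← Matrix.mul_assoc L, hLS]
  simp only [Matrix.mul_sub, Matrix.sub_mul, Matrix.mul_smul, Matrix.mul_assoc]
  module

theorem dressing_add_one_mul (hSyl : S⁻¹ * K - K * T = V * U) (hS : IsUnit S) (hT : IsUnit T)
    (hΞ : ∀ y, Ξ (y + 1) = Ξ y * S) (hΘ : ∀ y, Θ (y + 1) = T * Θ y) (x : ℤ) :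
    𝔄 (x + 1) * T = 𝔄 x + ε • (L * Ξ (x + 1) * V * U) := by
  have hKT : K * T = S⁻¹ * K - V * U := by rw [← hSyl]; abel
  have hΞS : Ξ (x + 1) * S⁻¹ = Ξ x := by
    rw [hΞ, mul_nonsing_inv_cancel_right _ _ ((isUnit_iff_isUnit_det _).mp hS)]
  change ((Θ (x + 1))⁻¹ - ε • (L * Ξ (x + 1) * K)) * T = (Θ x)⁻¹ - ε • (L * Ξ x * K) + _
  rw [hΘ, Matrix.mul_inv_rev, Matrix.sub_mul,
    nonsing_inv_mul_cancel_right _ _ ((isUnit_iff_isUnit_det _).mp hT),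
    Matrix.smul_mul, Matrix.mul_assoc _ K, hKT, ← hΞS]
  simp only [Matrix.mul_sub, Matrix.mul_assoc]
  module

theorem dressing_inv_mul_mul_add_one_sub (hSyl : T⁻¹ * L - L * S = W * Y)
    (hΞ : ∀ y, Ξ (y + 1) = S * Ξ y) (hΘ : ∀ y, Θ (y + 1) = Θ y * T) (hΞu : ∀ y, IsUnit (Ξ y))
    (hΘu : ∀ y, IsUnit (Θ y)) (hA : ∀ y, IsUnit (𝔄 y)) (x : ℤ) :
    (𝔄 (x + 1))⁻¹ * L * Ξ (x + 1) - (𝔄 x)⁻¹ * L * Ξ x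
      = -((𝔄 (x + 1))⁻¹ * W * Y * (𝔅 x)⁻¹) := by
  have key : L * Ξ (x + 1) + W * Y * (𝔅 x)⁻¹ = 𝔄 (x + 1) * ((𝔄 x)⁻¹ * L * Ξ x) := by
    have h := congrArg (· * Ξ x) hSyl
    rw [dressing_add_one hSyl hΞ hΘ, dressing_swap_inv (hΞu x) (hΘu x) (hA x), hΞ]
    simp only [Matrix.sub_mul, Matrix.add_mul, Matrix.mul_add, Matrix.mul_smul, Matrix.smul_mul,
      Matrix.mul_assoc,
      mul_nonsing_inv_cancel_left _ _ ((isUnit_iff_isUnit_det _).mp (hA x))] at h ⊢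
    linear_combination (norm := module) -h
  calc (𝔄 (x + 1))⁻¹ * L * Ξ (x + 1) - (𝔄 x)⁻¹ * L * Ξ x
      = (𝔄 (x + 1))⁻¹ * (L * Ξ (x + 1) + W * Y * (𝔅 x)⁻¹) - (𝔄 x)⁻¹ * L * Ξ x
          - (𝔄 (x + 1))⁻¹ * W * Y * (𝔅 x)⁻¹ := by
        simp only [Matrix.mul_add, Matrix.mul_assoc]; abel
    _ = _ := by
        rw [key, nonsing_inv_mul_cancel_left _ _ ((isUnit_iff_isUnit_det _).mp (hA (x + 1))),
          sub_self, zero_sub]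

theorem mul_mul_dressing_inv_add_one_sub (hSyl : S⁻¹ * K - K * T = V * U) (hS : IsUnit S)
    (hT : IsUnit T) (hΞ : ∀ y, Ξ (y + 1) = Ξ y * S) (hΘ : ∀ y, Θ (y + 1) = T * Θ y)
    (hΞu : ∀ y, IsUnit (Ξ y)) (hΘu : ∀ y, IsUnit (Θ y)) (hA : ∀ y, IsUnit (𝔄 y)) (x : ℤ) :
    Ξ (x + 1) * K * (𝔄 (x + 1))⁻¹ - Ξ x * K * (𝔄 x)⁻¹
      = -((𝔅 (x + 1))⁻¹ * V * U * (𝔄 x)⁻¹) := by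
  have key : Ξ (x + 1) * K * (𝔄 (x + 1))⁻¹ * 𝔄 x + (𝔅 (x + 1))⁻¹ * V * U = Ξ x * K := by
    have hA₀ : 𝔄 x = 𝔄 (x + 1) * T - ε • (L * Ξ (x + 1) * V * U) := by
      rw [dressing_add_one_mul hSyl hS hT hΞ hΘ, add_sub_cancel_right]
    have h := congrArg (Ξ (x + 1) * ·) hSyl
    have hΞS : Ξ (x + 1) * S⁻¹ = Ξ x := by
      rw [hΞ, mul_nonsing_inv_cancel_right _ _ ((isUnit_iff_isUnit_det _).mp hS)]
    rw [hA₀, dressing_swap_inv (hΞu _) (hΘu _) (hA _), ← hΞS]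
    simp only [Matrix.mul_sub, Matrix.add_mul, Matrix.mul_smul, Matrix.smul_mul, Matrix.mul_assoc,
      nonsing_inv_mul_cancel_left _ _ ((isUnit_iff_isUnit_det _).mp (hA (x + 1)))] at h ⊢
    linear_combination (norm := module) -h
  calc Ξ (x + 1) * K * (𝔄 (x + 1))⁻¹ - Ξ x * K * (𝔄 x)⁻¹
      = (Ξ (x + 1) * K * (𝔄 (x + 1))⁻¹ * 𝔄 x + (𝔅 (x + 1))⁻¹ * V * U) * (𝔄 x)⁻¹
          - Ξ x * K * (𝔄 x)⁻¹ - (𝔅 (x + 1))⁻¹ * V * U * (𝔄 x)⁻¹ := by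
        simp only [Matrix.add_mul, Matrix.mul_assoc,
          mul_nonsing_inv _ ((isUnit_iff_isUnit_det _).mp (hA x)), Matrix.mul_one]
        abel
    _ = _ := by rw [key, sub_self, zero_sub]

theorem dressing_inv_mul_add_one_mul_inv (hSyl : S⁻¹ * K - K * T = V * U)
    (hSyl' : T⁻¹ * L - L * S = W * Y) (hS : IsUnit S) (hT : IsUnit T)
    (hΞ : ∀ y, Ξ (y + 1) = S * Ξ y) (hΞ' : ∀ y, Ξ (y + 1) = Ξ y * S)
    (hΘ : ∀ y, Θ (y + 1) = T * Θ y) (hΘ' : ∀ y, Θ (y + 1) = Θ y * T)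
    (hΞu : ∀ y, IsUnit (Ξ y)) (hΘu : ∀ y, IsUnit (Θ y)) (hA : ∀ y, IsUnit (𝔄 y)) (x : ℤ) :
    (𝔄 x)⁻¹ * 𝔄 (x + 1) * (𝔄 x)⁻¹
      = (𝔄 (x - 1))⁻¹ - ε • ((𝔄 x)⁻¹ * W * Y * (𝔅 x)⁻¹ * V * U * (𝔄 (x - 1))⁻¹) := by
  have hdA := (isUnit_iff_isUnit_det _).mp (hA x)
  have hpred := dressing_add_one (ε := ε) (K := K) hSyl' hΞ hΘ' (x - 1)
  have hQ := mul_mul_dressing_inv_add_one_sub hSyl hS hT hΞ' hΘ hΞu hΘu hA (x - 1)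
  rw [sub_add_cancel] at hpred hQ
  have hpred' := congrArg (fun M => (𝔄 x)⁻¹ * M * (𝔄 (x - 1))⁻¹) hpred
  have hQ' := congrArg (fun M => ε • ((𝔄 x)⁻¹ * W * Y * M)) hQ
  rw [dressing_add_one hSyl' hΞ hΘ']
  simp only [Matrix.mul_add, Matrix.add_mul, Matrix.mul_sub, Matrix.mul_neg, Matrix.mul_smul,
    Matrix.smul_mul, Matrix.mul_assoc, mul_nonsing_inv _ hdA,
    mul_nonsing_inv _ ((isUnit_iff_isUnit_det _).mp (hA (x - 1))),
    nonsing_inv_mul_cancel_left _ _ hdA, Matrix.mul_one] at hpred' hQ' ⊢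
  linear_combination (norm := module) hQ' - hpred'

theorem dressing_inv_mul_sub_one_mul_inv (hSyl : S⁻¹ * K - K * T = V * U)
    (hSyl' : T⁻¹ * L - L * S = W * Y) (hS : IsUnit S) (hT : IsUnit T)
    (hΞ : ∀ y, Ξ (y + 1) = S * Ξ y) (hΞ' : ∀ y, Ξ (y + 1) = Ξ y * S)
    (hΘ : ∀ y, Θ (y + 1) = T * Θ y) (hΘ' : ∀ y, Θ (y + 1) = Θ y * T)
    (hΞu : ∀ y, IsUnit (Ξ y)) (hΘu : ∀ y, IsUnit (Θ y)) (hA : ∀ y, IsUnit (𝔄 y)) (x : ℤ) :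
    (𝔄 x)⁻¹ * 𝔄 (x - 1) * (𝔄 x)⁻¹
      = (𝔄 (x + 1))⁻¹ - ε • ((𝔄 (x + 1))⁻¹ * W * Y * (𝔅 x)⁻¹ * V * U * (𝔄 x)⁻¹) := by
  have hdA := (isUnit_iff_isUnit_det _).mp (hA x)
  have hpred := dressing_add_one_mul (ε := ε) (L := L) hSyl hS hT hΞ' hΘ (x - 1)
  rw [sub_add_cancel] at hpred
  have hsucc := congrArg (fun M => (𝔄 (x + 1))⁻¹ * M * (𝔄 x)⁻¹)
    (dressing_add_one_mul (ε := ε) (L := L) hSyl hS hT hΞ' hΘ x)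
  have hP := congrArg (fun M => ε • (M * V * U * (𝔄 x)⁻¹))
    (dressing_inv_mul_mul_add_one_sub hSyl' hΞ hΘ' hΞu hΘu hA x)
  rw [eq_sub_of_add_eq hpred.symm]
  simp only [Matrix.mul_add, Matrix.add_mul, Matrix.mul_sub, Matrix.sub_mul, Matrix.neg_mul,
    Matrix.mul_smul, Matrix.smul_mul, smul_sub, smul_neg, Matrix.mul_assoc, mul_nonsing_inv _ hdA,
    nonsing_inv_mul_cancel_left _ _ hdA, nonsing_inv_mul_cancel_left _ _
      ((isUnit_iff_isUnit_det _).mp (hA (x + 1))), Matrix.mul_one] at hsucc hP ⊢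
  linear_combination (norm := module) hsucc + hP

theorem dressing_ablowitzLadik (hSyl : S⁻¹ * K - K * T = V * U)
    (hSyl' : T⁻¹ * L - L * S = W * Y) (hS : IsUnit S) (hT : IsUnit T)
    (hΞ : ∀ y, Ξ (y + 1) = S * Ξ y) (hΞ' : ∀ y, Ξ (y + 1) = Ξ y * S)
    (hΘ : ∀ y, Θ (y + 1) = T * Θ y) (hΘ' : ∀ y, Θ (y + 1) = Θ y * T)
    (hΞu : ∀ y, IsUnit (Ξ y)) (hΘu : ∀ y, IsUnit (Θ y)) (hA : ∀ y, IsUnit (𝔄 y))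
    {q r : ℤ → Matrix κ κ R} (hq : ∀ y, q y = U * (𝔄 y)⁻¹ * W)
    (hr : ∀ y, r y = Y * (𝔅 y)⁻¹ * V) (x : ℤ) :
    -(U * ((𝔄 x)⁻¹ * (𝔄 (x + 1) + 𝔄 (x - 1) - (2 : R) • 𝔄 x) * (𝔄 x)⁻¹) * W)
      + q (x + 1) - (2 : R) • q x + q (x - 1)
      - ε • (q (x + 1) * r x * q x + q x * r x * q (x - 1)) = 0 := by
  have hsucc := congrArg (U * · * W)
    (dressing_inv_mul_add_one_mul_inv hSyl hSyl' hS hT hΞ hΞ' hΘ hΘ' hΞu hΘu hA x)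
  have hpred := congrArg (U * · * W)
    (dressing_inv_mul_sub_one_mul_inv hSyl hSyl' hS hT hΞ hΞ' hΘ hΘ' hΞu hΘu hA x)
  simp only [hq, hr]
  simp only [Matrix.mul_add, Matrix.add_mul, Matrix.mul_sub, Matrix.sub_mul, Matrix.mul_smul,
    Matrix.smul_mul, Matrix.mul_assoc, nonsing_inv_mul_cancel_left _ _
      ((isUnit_iff_isUnit_det _).mp (hA x))] at hsucc hpred ⊢
  linear_combination (norm := module) -hsucc - hpred

theorem dressing_ablowitzLadik_aux (hSyl' : T⁻¹ * L - L * S = W * Y)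
    (hΞ : ∀ y, Ξ (y + 1) = S * Ξ y) (hΘ' : ∀ y, Θ (y + 1) = Θ y * T)
    (hΞu : ∀ y, IsUnit (Ξ y)) (hΘu : ∀ y, IsUnit (Θ y)) (hA : ∀ y, IsUnit (𝔄 y))
    {p q r : ℤ → Matrix κ κ R} (hp : ∀ y, p y = ε • (U * Θ y * L * (𝔅 y)⁻¹ * V))
    (hq : ∀ y, q y = U * (𝔄 y)⁻¹ * W) (hr : ∀ y, r y = Y * (𝔅 y)⁻¹ * V) (x : ℤ) :
    p (x + 1) - p x = -(ε • (q (x + 1) * r x)) := by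
  have h := congrArg (fun M => ε • (U * M * V))
    (dressing_inv_mul_mul_add_one_sub hSyl' hΞ hΘ' hΞu hΘu hA x)
  have hp' : ∀ y, p y = ε • (U * ((𝔄 y)⁻¹ * L * Ξ y) * V) := fun y => by
    rw [hp, ← mul_mul_dressing_swap_inv (hΞu y) (hΘu y) (hA y)]
    simp only [Matrix.mul_assoc]
  simp only [hp', hq, hr]
  simp only [Matrix.mul_sub, Matrix.sub_mul, Matrix.mul_neg, Matrix.neg_mul, smul_sub, smul_neg,
    Matrix.mul_assoc] at h ⊢
  exact h

end Dressing

section Conj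

variable {a b c : Type*}

theorem mconj_eq_conjTranspose_transpose (A : Matrix a b ℂ) : mconj A = Aᴴᵀ := rfl

theorem mconj_mconj (A : Matrix a b ℂ) : mconj (mconj A) = A := by
  ext i j; simp [mconj]

theorem mconj_mul [Fintype b] (A : Matrix a b ℂ) (B : Matrix b c ℂ) :
    mconj (A * B) = mconj A * mconj B :=
  Matrix.map_mul

theorem mconj_sub (A B : Matrix a b ℂ) : mconj (A - B) = mconj A - mconj B := by
  ext i j; simp [mconj]

theorem mconj_add (A B : Matrix a b ℂ) : mconj (A + B) = mconj A + mconj B := by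
  ext i j; simp [mconj]

theorem mconj_smul (z : ℂ) (A : Matrix a b ℂ) : mconj (z • A) = starRingEnd ℂ z • mconj A := by
  ext i j; simp [mconj]

variable [Fintype a] [DecidableEq a]

theorem mconj_inv (A : Matrix a a ℂ) : mconj A⁻¹ = (mconj A)⁻¹ := by
  simp only [mconj_eq_conjTranspose_transpose, conjTranspose_nonsing_inv, transpose_nonsing_inv]

theorem mconj_zpow (A : Matrix a a ℂ) (x : ℤ) : mconj (A ^ x) = mconj A ^ x := by
  simp only [mconj_eq_conjTranspose_transpose, conjTranspose_zpow, transpose_zpow]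

theorem mconj_exp (A : Matrix a a ℂ) : mconj (NormedSpace.exp A) = NormedSpace.exp (mconj A) := by
  simp only [mconj_eq_conjTranspose_transpose, exp_conjTranspose, exp_transpose]

theorem isUnit_mconj {A : Matrix a a ℂ} (h : IsUnit A) : IsUnit (mconj A) := by
  simpa only [mconj_eq_conjTranspose_transpose, isUnit_transpose, isUnit_conjTranspose] using h

end Conj

section PlaneWave

variable {ι : Type*} [Fintype ι] [DecidableEq ι] {Z : Matrix ι ι ℂ}

noncomputable def planeWave (Z : Matrix ι ι ℂ) (x : ℤ) (t : ℝ) : Matrix ι ι ℂ :=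
  Z ^ x * NormedSpace.exp ((-(Complex.I * t)) • (Z + Z⁻¹ - 2))

theorem commute_inv_of_isUnit {R : Type*} [CommRing R] {A : Matrix ι ι R} (hA : IsUnit A) :
    Commute A A⁻¹ := by
  have hd := (isUnit_iff_isUnit_det A).mp hA
  exact (mul_nonsing_inv A hd).trans (nonsing_inv_mul A hd).symm

theorem commute_exp_smul (hZ : IsUnit Z) (c : ℂ) :
    Commute Z (NormedSpace.exp (c • (Z + Z⁻¹ - 2))) :=
  ((((Commute.refl Z).add_right (commute_inv_of_isUnit hZ)).sub_right
    (Commute.ofNat_right Z 2)).smul_right c).exp_right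

theorem commute_planeWave (hZ : IsUnit Z) (x : ℤ) (t : ℝ) : Commute Z (planeWave Z x t) :=
  (Matrix.Commute.self_zpow Z x).mul_right (commute_exp_smul hZ _)

theorem planeWave_add_one (hZ : IsUnit Z) (x : ℤ) (t : ℝ) :
    planeWave Z (x + 1) t = Z * planeWave Z x t := by
  rw [planeWave, add_comm, zpow_one_add ((isUnit_iff_isUnit_det Z).mp hZ), Matrix.mul_assoc,
    planeWave]

theorem planeWave_add_one' (hZ : IsUnit Z) (x : ℤ) (t : ℝ) :
    planeWave Z (x + 1) t = planeWave Z x t * Z := by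
  rw [planeWave_add_one hZ, commute_planeWave hZ]

theorem planeWave_sub_one (hZ : IsUnit Z) (x : ℤ) (t : ℝ) :
    planeWave Z (x - 1) t = planeWave Z x t * Z⁻¹ := by
  rw [← sub_add_cancel x 1, planeWave_add_one' hZ, add_sub_cancel_right,
    mul_nonsing_inv_cancel_right _ _ ((isUnit_iff_isUnit_det Z).mp hZ)]

theorem isUnit_planeWave (hZ : IsUnit Z) (x : ℤ) (t : ℝ) : IsUnit (planeWave Z x t) :=
  ((isUnit_iff_isUnit_det _).mpr (((isUnit_iff_isUnit_det Z).mp hZ).det_zpow x)).mul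
    (isUnit_exp _)

theorem planeWave_inv (hZ : IsUnit Z) (x : ℤ) (t : ℝ) :
    (planeWave Z x t)⁻¹ = planeWave Z⁻¹ x (-t) := by
  rw [planeWave, planeWave, (Matrix.Commute.zpow_left (commute_exp_smul hZ _) x).eq,
    Matrix.mul_inv_rev, Matrix.inv_zpow,
    nonsing_inv_nonsing_inv _ ((isUnit_iff_isUnit_det Z).mp hZ),
    add_comm Z⁻¹ Z, ← Matrix.exp_neg, ← neg_smul]
  push_cast
  ring_nf

theorem mconj_planeWave (x : ℤ) (t : ℝ) :
    mconj (planeWave Z x t) = planeWave (mconj Z) x (-t) := by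
  simp only [planeWave, mconj_mul, mconj_zpow, mconj_exp, mconj_smul, mconj_sub, mconj_add,
    mconj_inv]
  rw [mconj_eq_conjTranspose_transpose 2, conjTranspose_ofNat, transpose_ofNat]
  congr 3
  simp

theorem dressing_planeWave_eq {S T K L : Matrix ι ι ℂ} {ε : ℂ}
    (hT : IsUnit T) (x : ℤ) (s : ℝ) :
    dressing K L ε (fun y => planeWave S y s) (fun y => planeWave T y (-s)) x
      = planeWave T⁻¹ x s - ε • (L * planeWave S x s * K) := by
  rw [dressing, planeWave_inv hT, neg_neg]

end PlaneWave

section Derivative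

/- The entrywise sup norm used in the statement is not submultiplicative; calculus in the matrix
algebra needs a ring norm. The operator norm below induces the same topology, so the derivatives
proved here are derivatives for the statement's norm as well. -/
attribute [-instance] Matrix.normedAddCommGroup Matrix.normedSpace
attribute [local instance] Matrix.linftyOpNormedRing Matrix.linftyOpNormedAlgebra

variable {ι : Type*} [Fintype ι] [DecidableEq ι]

theorem hasDerivAt_matrix_inv {F : ℝ → Matrix ι ι ℂ} {F' : Matrix ι ι ℂ} {t : ℝ}
    (hF : HasDerivAt F F' t) (hu : IsUnit (F t)) :
    HasDerivAt (fun s => (F s)⁻¹) (-((F t)⁻¹ * F' * (F t)⁻¹)) t := by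
  have := (hasFDerivAt_ringInverse (𝕜 := ℝ) hu.unit).comp_hasDerivAt t hF
  simp only [Function.comp_def, ← Matrix.nonsing_inv_eq_ringInverse, Matrix.coe_units_inv,
    IsUnit.unit_spec] at this
  exact this

theorem hasDerivAt_planeWave {Z : Matrix ι ι ℂ} (hZ : IsUnit Z) (x : ℤ) (t : ℝ) :
    HasDerivAt (fun s => planeWave Z x s)
      ((-Complex.I) • (planeWave Z (x + 1) t + planeWave Z (x - 1) t - (2 : ℂ) • planeWave Z x t))
      t := by
  set N : Matrix ι ι ℂ := (-Complex.I) • (Z + Z⁻¹ - 2)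
  have hfun : (fun s => planeWave Z x s) = fun s => Z ^ x * NormedSpace.exp (s • N) := by
    funext s
    rw [planeWave, ← Complex.coe_smul, smul_smul, mul_neg, mul_comm]
  rw [hfun]
  refine ((hasDerivAt_exp_smul_const N t).const_mul (Z ^ x)).congr_deriv ?_
  erw [← Matrix.mul_assoc, ← congrFun hfun t, planeWave_add_one' hZ, planeWave_sub_one hZ]
  simp only [N, Matrix.mul_smul, Matrix.mul_sub, Matrix.mul_add, mul_two, two_smul]

theorem hasDerivAt_dressing_planeWave {S T K L : Matrix ι ι ℂ} {ε : ℂ} (hS : IsUnit S)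
    (hT : IsUnit T) (x : ℤ) (t : ℝ) :
    HasDerivAt (fun s => dressing K L ε (fun y => planeWave S y s) (fun y => planeWave T y (-s)) x)
      ((-Complex.I) •
        (dressing K L ε (fun y => planeWave S y t) (fun y => planeWave T y (-t)) (x + 1)
          + dressing K L ε (fun y => planeWave S y t) (fun y => planeWave T y (-t)) (x - 1)
          - (2 : ℂ) • dressing K L ε (fun y => planeWave S y t) (fun y => planeWave T y (-t)) x))
      t := by
  simp only [dressing_planeWave_eq hT]
  refine ((hasDerivAt_planeWave (isUnit_nonsing_inv_iff.mpr hT) x t).sub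
    ((((hasDerivAt_planeWave hS x t).const_mul L).mul_const K).const_smul ε)).congr_deriv ?_
  simp only [Matrix.mul_smul, Matrix.smul_mul, Matrix.mul_add, Matrix.add_mul, Matrix.mul_sub,
    Matrix.sub_mul]
  module

end Derivative

theorem HasDerivAt.matrix_mul_mul {ι ι' κ κ' : Type*} [Fintype ι] [Fintype ι'] [Fintype κ]
    [Fintype κ'] {F : ℝ → Matrix ι ι' ℂ} {F' : Matrix ι ι' ℂ} {t : ℝ}
    (hF : HasDerivAt F F' t) (U : Matrix κ ι ℂ) (W : Matrix ι' κ' ℂ) :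
    HasDerivAt (fun s => U * F s * W) (U * F' * W) t := by
  let Λ : Matrix ι ι' ℂ →ₗ[ℝ] Matrix κ κ' ℂ :=
    { toFun := fun G => U * G * W
      map_add' := fun G H => by simp only [Matrix.mul_add, Matrix.add_mul]
      map_smul' := fun c G => by simp }
  exact Λ.toContinuousLinearMap.hasFDerivAt.comp_hasDerivAt t hF

theorem hasDerivAt_mul_inv_mul {ι κ : Type*} [Fintype ι] [DecidableEq ι] [Fintype κ]
    {F : ℝ → Matrix ι ι ℂ} {F' : Matrix ι ι ℂ} {t : ℝ} (hF : HasDerivAt F F' t)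
    (hu : IsUnit (F t)) (U : Matrix κ ι ℂ) (W : Matrix ι κ ℂ) :
    HasDerivAt (fun s => U * (F s)⁻¹ * W) (-(U * ((F t)⁻¹ * F' * (F t)⁻¹) * W)) t := by
  simpa only [Matrix.mul_neg, Matrix.neg_mul] using (hasDerivAt_matrix_inv hF hu).matrix_mul_mul U W

section Reduction

variable {ι κ : Type*} [Fintype ι] [DecidableEq ι] [Fintype κ]
  {S T K L : Matrix ι ι ℂ} {U Y : Matrix κ ι ℂ} {V W : Matrix ι κ ℂ} {ε : ℂ}

theorem planeWave_dressing_ablowitzLadik (hS : IsUnit S) (hT : IsUnit T)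
    (hSyl : S⁻¹ * K - K * T = V * U) (hSyl' : T⁻¹ * L - L * S = W * Y)
    (hA : ∀ y s, IsUnit
      (dressing K L ε (fun y => planeWave S y s) (fun y => planeWave T y (-s)) y))
    {q : ℤ → ℝ → Matrix κ κ ℂ} {r : ℤ → Matrix κ κ ℂ} {t : ℝ}
    (hq : ∀ y s, q y s
      = U * (dressing K L ε (fun y => planeWave S y s) (fun y => planeWave T y (-s)) y)⁻¹ * W)
    (hr : ∀ y, r y
      = Y * (dressing L K ε (fun y => planeWave T y (-t)) (fun y => planeWave S y t) y)⁻¹ * V)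
    (x : ℤ) :
    Complex.I • pdt' q x t + q (x + 1) t - (2 : ℂ) • q x t + q (x - 1) t
      - ε • (q (x + 1) t * r x * q x t + q x t * r x * q (x - 1) t) = 0 := by
  have hderiv : HasDerivAt (q x) _ t := funext (hq x) ▸
    hasDerivAt_mul_inv_mul (hasDerivAt_dressing_planeWave hS hT x t) (hA x t) U W
  erw [pdt', hderiv.deriv]
  rw [Matrix.mul_smul, Matrix.smul_mul, Matrix.mul_smul, Matrix.smul_mul, smul_neg, smul_smul,
    mul_neg, Complex.I_mul_I, neg_neg, one_smul]
  exact dressing_ablowitzLadik hSyl hSyl' hS hT (planeWave_add_one hS · t) (planeWave_add_one' hS · t)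
    (planeWave_add_one hT · (-t)) (planeWave_add_one' hT · (-t)) (isUnit_planeWave hS · t)
    (isUnit_planeWave hT · (-t)) (hA · t) (fun y => hq y t) hr x

theorem mconj_dressing_planeWave (hε : starRingEnd ℂ ε = ε) (x : ℤ) (t : ℝ) :
    mconj (dressing K (mconj K) ε (fun y => planeWave S y t)
        (fun y => planeWave (mconj S) y (-t)) x)
      = dressing (mconj K) K ε (fun y => planeWave (mconj S) y (-t))
        (fun y => planeWave S y t) x := by
  simp only [dressing, mconj_sub, mconj_smul, mconj_mul, mconj_inv, mconj_planeWave, mconj_mconj,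
    neg_neg, hε]

end Reduction

theorem semidiscrete_matrix_NLS_cc_reduction_solutions_general
    {n m : ℕ}
    (S : Matrix (Fin n) (Fin n) ℂ) (hS : IsUnit S)
    (U : Matrix (Fin m) (Fin n) ℂ) (V : Matrix (Fin n) (Fin m) ℂ)
    (K : Matrix (Fin n) (Fin n) ℂ)
    (ε : ℂ) (hε : ε = 1 ∨ ε = -1)
    (hSyl : S⁻¹ * K - K * mconj S = V * U)
    (Ξ : ℤ → ℝ → Matrix (Fin n) (Fin n) ℂ)
    (hΞ : ∀ (x : ℤ) (t : ℝ),
      Ξ x t = S ^ x * NormedSpace.exp ((-(Complex.I * t)) • (S + S⁻¹ - 2)))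
    (hinv1 : ∀ (x : ℤ) (t : ℝ), IsUnit ((mconj (Ξ x t))⁻¹ - ε • (mconj K * Ξ x t * K)))
    (q : ℤ → ℝ → Matrix (Fin m) (Fin m) ℂ)
    (p : ℤ → ℝ → Matrix (Fin m) (Fin m) ℂ)
    (hq : ∀ (x : ℤ) (t : ℝ),
      q x t = U * ((mconj (Ξ x t))⁻¹ - ε • (mconj K * Ξ x t * K))⁻¹ * mconj V)
    (hp : ∀ (x : ℤ) (t : ℝ),
      p x t = ε • (U * mconj (Ξ x t) * mconj K
        * ((Ξ x t)⁻¹ - ε • (K * mconj (Ξ x t) * mconj K))⁻¹ * V)) :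
    (∀ (x : ℤ) (t : ℝ),
      Complex.I • pdt' q x t + q (x + 1) t - (2 : ℂ) • q x t + q (x - 1) t
        - ε • (q (x + 1) t * mconj (q x t) * q x t + q x t * mconj (q x t) * q (x - 1) t)
        = 0) ∧
    (∀ (x : ℤ) (t : ℝ), p (x + 1) t - p x t = -(ε • (q (x + 1) t * mconj (q x t)))) := by
  obtain rfl : Ξ = fun x t => planeWave S x t := funext₂ hΞ
  simp only [mconj_planeWave] at hinv1 hq hp
  have hT : IsUnit (mconj S) := isUnit_mconj hS
  have hSyl' : (mconj S)⁻¹ * mconj K - mconj K * S = mconj V * mconj U := by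
    simpa only [mconj_sub, mconj_mul, mconj_inv, mconj_mconj] using congrArg mconj hSyl
  have hεc : starRingEnd ℂ ε = ε := by rcases hε with rfl | rfl <;> simp
  have hqc : ∀ t y, mconj (q y t) = mconj U * (dressing (mconj K) K ε
      (fun y => planeWave (mconj S) y (-t)) (fun y => planeWave S y t) y)⁻¹ * V := fun t y => by
    rw [hq, mconj_mul, mconj_mul, mconj_inv, mconj_mconj]
    erw [mconj_dressing_planeWave hεc]
  refine ⟨fun x t => planeWave_dressing_ablowitzLadik hS hT hSyl hSyl' hinv1 hq (hqc t) x,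
    fun x t => ?_⟩
  exact dressing_ablowitzLadik_aux hSyl' (planeWave_add_one hS · t) (planeWave_add_one' hT · (-t))
    (isUnit_planeWave hS · t) (isUnit_planeWave hT · (-t)) (hinv1 · t) (fun y => hp y t)
    (fun y => hq y t) (hqc t) x

/-- Solutions of the matrix Ablowitz–Ladik equations with complex-conjugation reduction. -/
theorem semidiscrete_matrix_NLS_cc_reduction_solutions
    {n m : ℕ}
    (S : Matrix (Fin n) (Fin n) ℂ) (hS : IsUnit S)
    (U : Matrix (Fin m) (Fin n) ℂ) (V : Matrix (Fin n) (Fin m) ℂ)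
    (K : Matrix (Fin n) (Fin n) ℂ)
    (ε : ℂ) (hε : ε = 1 ∨ ε = -1)
    (hSyl : S⁻¹ * K - K * mconj S = V * U)
    (Ξ : ℤ → ℝ → Matrix (Fin n) (Fin n) ℂ)
    (hΞ : ∀ (x : ℤ) (t : ℝ),
      Ξ x t = S ^ x * NormedSpace.exp ((-(Complex.I * t)) • (S + S⁻¹ - 2)))
    (hinv1 : ∀ (x : ℤ) (t : ℝ), IsUnit ((mconj (Ξ x t))⁻¹ - ε • (mconj K * Ξ x t * K)))
    (hinv2 : ∀ (x : ℤ) (t : ℝ), IsUnit ((Ξ x t)⁻¹ - ε • (K * mconj (Ξ x t) * mconj K)))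
    (q : ℤ → ℝ → Matrix (Fin m) (Fin m) ℂ)
    (p : ℤ → ℝ → Matrix (Fin m) (Fin m) ℂ)
    (hq : ∀ (x : ℤ) (t : ℝ),
      q x t = U * ((mconj (Ξ x t))⁻¹ - ε • (mconj K * Ξ x t * K))⁻¹ * mconj V)
    (hp : ∀ (x : ℤ) (t : ℝ),
      p x t = ε • (U * mconj (Ξ x t) * mconj K
        * ((Ξ x t)⁻¹ - ε • (K * mconj (Ξ x t) * mconj K))⁻¹ * V)) :
    (∀ (x : ℤ) (t : ℝ),
      Complex.I • pdt' q x t + q (x + 1) t - (2 : ℂ) • q x t + q (x - 1) t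
        - ε • (q (x + 1) t * mconj (q x t) * q x t + q x t * mconj (q x t) * q (x - 1) t)
        = 0) ∧
    (∀ (x : ℤ) (t : ℝ), p (x + 1) t - p x t = -(ε • (q (x + 1) t * mconj (q x t)))) :=
  semidiscrete_matrix_NLS_cc_reduction_solutions_general S hS U V K ε hε hSyl Ξ hΞ hinv1 q p hq hp
end

section
/- Let s₁, …, s_n be pairwise distinct complex numbers with Re(s_j) > 0 for all j. Then the n×n matrix K with entries K_{jl} = 1/(s_j + conj(s_l)) is Hermitian and positive definite. -/
/-!
Since `1 / (s_j + conj s_l) = ∫₀^∞ e^{-s_j t} e^{-conj(s_l) t} dt`, the matrix `K` is the Gram matrix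
of the functions `t ↦ e^{-conj(s_j) t}` in `L²(0, ∞)`. Exponentials with distinct exponents are
linearly independent, even as germs at a point: the derivatives of `∑ c_j e^{a_j t}` at `t₀` form a
Vandermonde system in the unknowns `c_j e^{a_j t₀}`. A Gram matrix of linearly independent vectors is
positive definite.
-/

open Matrix MeasureTheory Set Filter Topology
open scoped ComplexOrder

theorem contDiff_cexp_const_mul_ofReal {k : WithTop ℕ∞} (a : ℂ) :
    ContDiff ℝ k fun t : ℝ => Complex.exp (a * t) :=
  (contDiff_const.mul Complex.ofRealCLM.contDiff).cexp

theorem iteratedDeriv_cexp_const_mul_ofReal (k : ℕ) (a : ℂ) :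
    iteratedDeriv k (fun t : ℝ => Complex.exp (a * t)) =
      fun t : ℝ => a ^ k * Complex.exp (a * t) := by
  induction k with
  | zero => simp
  | succ k ih =>
    ext t
    rw [iteratedDeriv_succ, ih]
    have := (((hasDerivAt_id' t).ofReal_comp.const_mul a).cexp).const_mul (a ^ k)
    rw [this.deriv]
    simp only [Complex.ofReal_one, mul_one]
    ring

theorem eq_zero_of_sum_mul_cexp_eventuallyEq_zero {n : ℕ} {a : Fin n → ℂ}
    (ha : Function.Injective a) {c : Fin n → ℂ} {t₀ : ℝ}
    (h : (fun t : ℝ => ∑ j, c j * Complex.exp (a j * t)) =ᶠ[𝓝 t₀] 0) : c = 0 := by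
  have hw : (fun j => c j * Complex.exp (a j * t₀)) ᵥ* vandermonde a = 0 := by
    ext k
    have := h.iteratedDeriv_eq k
    rw [iteratedDeriv_fun_sum fun j _ =>
      (contDiff_const.mul (contDiff_cexp_const_mul_ofReal (a j))).contDiffAt] at this
    simpa [vecMul, dotProduct, iteratedDeriv_cexp_const_mul_ofReal, mul_comm, mul_left_comm,
      mul_assoc] using this
  have hc := eq_zero_of_vecMul_eq_zero (det_vandermonde_ne_zero_iff.mpr ha) hw
  ext j
  simpa using congrFun hc j

theorem MeasureTheory.Lp.coeFn_finset_sum {α E ι : Type*} {m : MeasurableSpace α} {p : ENNReal}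
    {μ : Measure α} [NormedAddCommGroup E] (s : Finset ι) (f : ι → Lp E p μ) :
    ⇑(∑ i ∈ s, f i) =ᵐ[μ] ∑ i ∈ s, ⇑(f i) := by
  classical
  induction s using Finset.induction_on with
  | empty => simpa using Lp.coeFn_zero E p μ
  | insert i s hi ih =>
    simp only [Finset.sum_insert hi]
    exact (Lp.coeFn_add _ _).trans (EventuallyEq.rfl.add ih)

theorem memLp_two_cexp_mul_Ioi {a : ℂ} (ha : a.re < 0) :
    MemLp (fun t : ℝ => Complex.exp (a * t)) 2 (volume.restrict (Ioi 0)) := by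
  refine (memLp_two_iff_integrable_sq_norm
    (contDiff_cexp_const_mul_ofReal (k := 0) a).continuous.aestronglyMeasurable).mpr ?_
  have h2a : (2 * a).re < 0 := by
    simp only [Complex.mul_re, Complex.re_ofNat, Complex.im_ofNat, zero_mul, sub_zero]
    linarith
  refine (integrableOn_exp_mul_complex_Ioi h2a 0).norm.congr (ae_of_all _ fun t => ?_)
  show ‖Complex.exp (2 * a * t)‖ = ‖Complex.exp (a * t)‖ ^ 2
  rw [Complex.norm_exp, Complex.norm_exp, ← Real.exp_nat_mul]
  simp only [Complex.mul_re, Complex.re_ofNat, Complex.im_ofNat, Complex.ofReal_re,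
    Complex.ofReal_im, Nat.cast_ofNat]
  ring_nf

noncomputable def cexpMulL2 (a : ℂ) (ha : a.re < 0) : Lp ℂ 2 (volume.restrict (Ioi (0 : ℝ))) :=
  (memLp_two_cexp_mul_Ioi ha).toLp _

theorem inner_cexpMulL2 {a b : ℂ} (ha : a.re < 0) (hb : b.re < 0) :
    inner ℂ (cexpMulL2 a ha) (cexpMulL2 b hb) = -1 / (starRingEnd ℂ a + b) := by
  have hab : (starRingEnd ℂ a + b).re < 0 := by
    rw [Complex.add_re, Complex.conj_re]
    linarith
  rw [L2.inner_def]
  calc ∫ t in Ioi 0, inner ℂ (cexpMulL2 a ha t) (cexpMulL2 b hb t)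
      = ∫ t in Ioi (0 : ℝ), Complex.exp ((starRingEnd ℂ a + b) * t) := by
        refine integral_congr_ae ?_
        filter_upwards [MemLp.coeFn_toLp (memLp_two_cexp_mul_Ioi ha),
          MemLp.coeFn_toLp (memLp_two_cexp_mul_Ioi hb)] with t hat hbt
        rw [cexpMulL2, cexpMulL2, hat, hbt, RCLike.inner_apply, ← Complex.exp_conj,
          ← Complex.exp_add, map_mul, Complex.conj_ofReal, add_comm, add_mul]
    _ = -1 / (starRingEnd ℂ a + b) := by simp [integral_exp_mul_complex_Ioi hab]

theorem linearIndependent_cexpMulL2 {n : ℕ} {a : Fin n → ℂ} (ha : Function.Injective a)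
    (hre : ∀ j, (a j).re < 0) : LinearIndependent ℂ fun j => cexpMulL2 (a j) (hre j) := by
  rw [Fintype.linearIndependent_iff]
  intro c hc
  have hae : (fun t : ℝ => ∑ j, c j * Complex.exp (a j * t)) =ᵐ[volume.restrict (Ioi 0)] 0 := by
    have hsum := Lp.coeFn_finset_sum Finset.univ fun j => c j • cexpMulL2 (a j) (hre j)
    rw [hc] at hsum
    refine (EventuallyEq.trans ?_ hsum.symm).trans (Lp.coeFn_zero _ _ _)
    have hterm : ∀ j, ⇑(c j • cexpMulL2 (a j) (hre j)) =ᵐ[volume.restrict (Ioi 0)]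
        fun t : ℝ => c j * Complex.exp (a j * t) := fun j =>
      (Lp.coeFn_smul _ _).trans ((MemLp.coeFn_toLp _).const_smul (c j))
    filter_upwards [ae_all_iff.mpr hterm] with t ht
    simp [Finset.sum_apply, ht]
  have hcont : Continuous fun t : ℝ => ∑ j, c j * Complex.exp (a j * t) :=
    continuous_finsetSum _ fun j _ =>
      continuous_const.mul (contDiff_cexp_const_mul_ofReal (k := 0) (a j)).continuous
  have hzero := Measure.eqOn_open_of_ae_eq hae isOpen_Ioi hcont.continuousOn continuousOn_const
  exact congrFun (eq_zero_of_sum_mul_cexp_eventuallyEq_zero ha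
    (eventually_of_mem (Ioi_mem_nhds one_pos) hzero))

/-- The Cauchy matrix `(1/(s_j + conj s_l))` built from pairwise distinct complex
numbers with positive real parts is Hermitian and positive definite. -/
theorem cauchy_matrix_posDef
    {n : ℕ} (s : Fin n → ℂ)
    (hdist : Function.Injective s)
    (hre : ∀ j : Fin n, 0 < (s j).re)
    (K : Matrix (Fin n) (Fin n) ℂ)
    (hK : ∀ j l : Fin n, K j l = 1 / (s j + (starRingEnd ℂ) (s l))) :
    K.IsHermitian ∧ K.PosDef := by
  have hre' : ∀ j, (-starRingEnd ℂ (s j)).re < 0 := fun j => by simpa using hre j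
  have hgram : K = gram ℂ fun j => cexpMulL2 _ (hre' j) := by
    ext j l
    rw [hK, gram_apply, inner_cexpMulL2, map_neg, Complex.conj_conj, ← neg_add, div_neg,
      neg_div, neg_neg]
  have hpos : K.PosDef := hgram ▸ posDef_gram_of_linearIndependent
    (linearIndependent_cexpMulL2 (neg_injective.comp ((starRingEnd ℂ).injective.comp hdist)) hre')
  exact ⟨hpos.isHermitian, hpos⟩
end

section
/- Let s₁, …, s_n be pairwise distinct complex numbers with |s_j| < 1 for all j. Then the n×n matrix K with entries K_{jl} = 1/(1 − s_j · conj(s_l)) is Hermitian and positive definite. -/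
/-!
Expanding each entry as a geometric series gives `K = ∑ₖ vₖ vₖᴴ` with `vₖ = (s_j ^ k)_j`, so
`xᴴ K x = ∑ₖ |xᴴ vₖ|²`. The numbers `xᴴ vₖ` for `k < n` are the entries of `xᴴ V` for the
Vandermonde matrix `V` of the distinct `s_j`, which is invertible, so they do not all vanish
when `x ≠ 0`.
-/

open Matrix
open scoped ComplexOrder

section QuadraticForm

variable {ι β R : Type*} [Fintype ι] [NonUnitalSemiring R] [StarRing R]

theorem star_dotProduct_vecMulVec_star_mulVec (x v : ι → R) :
    star x ⬝ᵥ vecMulVec v (star v) *ᵥ x = (star x ⬝ᵥ v) * star (star x ⬝ᵥ v) := by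
  rw [vecMulVec_mulVec, ← star_dotProduct]
  simp only [dotProduct, Pi.smul_apply, op_smul_eq_mul, Finset.sum_mul, mul_assoc]

variable [TopologicalSpace R] [IsTopologicalSemiring R]

theorem Matrix.hasSum_star_dotProduct_mulVec {A : β → Matrix ι ι R} {M : Matrix ι ι R}
    (h : HasSum A M) (x : ι → R) : HasSum (fun b => star x ⬝ᵥ A b *ᵥ x) (star x ⬝ᵥ M *ᵥ x) :=
  hasSum_sum fun i _ => (hasSum_sum fun j _ =>
    ((Pi.hasSum.1 (Pi.hasSum.1 h i) j).mul_right (x j))).mul_left (star x i)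

end QuadraticForm

section CauchyKernel

variable {ι : Type*}

noncomputable def cauchyKernelMatrix (s : ι → ℂ) : Matrix ι ι ℂ :=
  of fun j l => (1 - s j * starRingEnd ℂ (s l))⁻¹

theorem isHermitian_cauchyKernelMatrix (s : ι → ℂ) : (cauchyKernelMatrix s).IsHermitian := by
  ext j l
  simp [cauchyKernelMatrix, mul_comm]

theorem hasSum_vecMulVec_pow_cauchyKernelMatrix {s : ι → ℂ} (hs : ∀ j, ‖s j‖ < 1) :
    HasSum (fun k : ℕ => vecMulVec (s ^ k) (star (s ^ k))) (cauchyKernelMatrix s) := by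
  refine Pi.hasSum.2 fun j => Pi.hasSum.2 fun l => ?_
  have hlt : ‖s j * starRingEnd ℂ (s l)‖ < 1 := by
    rw [norm_mul, Complex.norm_conj]
    exact mul_lt_one_of_nonneg_of_lt_one_left (norm_nonneg _) (hs j) (hs l).le
  simpa [cauchyKernelMatrix, vecMulVec_apply, mul_pow] using hasSum_geometric_of_norm_lt_one hlt

theorem posDef_cauchyKernelMatrix {n : ℕ} {s : Fin n → ℂ} (hinj : Function.Injective s)
    (hs : ∀ j, ‖s j‖ < 1) : (cauchyKernelMatrix s).PosDef := by
  refine .of_dotProduct_mulVec_pos (isHermitian_cauchyKernelMatrix s) fun x hx => ?_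
  set c : ℕ → ℂ := fun k => star x ⬝ᵥ s ^ k
  have hsum : HasSum (fun k => c k * star (c k)) (star x ⬝ᵥ cauchyKernelMatrix s *ᵥ x) := by
    simpa only [star_dotProduct_vecMulVec_star_mulVec] using
      hasSum_star_dotProduct_mulVec (hasSum_vecMulVec_pow_cauchyKernelMatrix hs) x
  obtain ⟨k, hk⟩ : ∃ k, c k ≠ 0 := by
    by_contra! h
    exact hx (star_eq_zero.1 (eq_zero_of_forall_pow_sum_mul_pow_eq_zero hinj fun i => h i))
  exact hasSum_lt (fun k => mul_star_self_nonneg (c k)) (mul_star_self_pos (.of_ne_zero hk))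
    hasSum_zero hsum

end CauchyKernel

/-- The Cauchy-like matrix `(1/(1 - s_j · conj s_l))` built from pairwise distinct
complex numbers in the open unit disk is Hermitian and positive definite. -/
theorem discrete_cauchy_matrix_posDef
    {n : ℕ} (s : Fin n → ℂ)
    (hdist : Function.Injective s)
    (habs : ∀ j : Fin n, ‖s j‖ < 1)
    (K : Matrix (Fin n) (Fin n) ℂ)
    (hK : ∀ j l : Fin n, K j l = 1 / (1 - s j * (starRingEnd ℂ) (s l))) :
    K.IsHermitian ∧ K.PosDef := by
  obtain rfl : K = cauchyKernelMatrix s := ext fun j l => by rw [hK, one_div]; rfl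
  exact ⟨isHermitian_cauchyKernelMatrix s, posDef_cauchyKernelMatrix hdist habs⟩
end

section
/- Let s₁, …, s_n be pairwise distinct complex numbers with Re(s_j) > 0 for all j, let K be the n×n matrix with entries K_{jl} = 1/(s_j + conj(s_l)), let C be an invertible diagonal complex n×n matrix, set S = diag(s₁,…,s_n), and for (x,t) ∈ ℝ² set Ξ(x,t) = C · exp(−x S − i t S²). Then for every (x,t) ∈ ℝ² the matrix I + Ξ(x,t)* K* Ξ(x,t) K is invertible; consequently the associated solution of the focusing scalar NLS equation is regular for all (x,t) ∈ ℝ². -/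
/-!
The Cayley transform `w ↦ (w - 1) / (w + 1)` maps the right half-plane injectively into the unit
disc and turns the Cauchy matrix `K_{jl} = 1 / (s_j + conj s_l)` into a diagonal congruence of the
Szegő kernel `(1 - conj ζ_j ζ_l)⁻¹ = ∑_k conj ζ_j ^ k ζ_l ^ k`. Its quadratic form is
`∑_k |∑_l ζ_l ^ k x_l|²`, which is positive for `x ≠ 0` because the Vandermonde matrix of the
distinct `ζ_l` is invertible; so `K` is positive definite.

Since `Ξ` is diagonal, `mconj Ξ * mconj K * Ξ = Ξᴴ (conj K) Ξ` is positive semidefinite, and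
`1 + B A` is invertible whenever `A` is positive definite and `B` positive semidefinite:
`(1 + B A) v = 0` forces `v* A v = -(A v)* B (A v) ≤ 0`.
-/

open Matrix

open scoped ComplexOrder

namespace Matrix

variable {n : Type*} [Fintype n] [DecidableEq n]

theorem IsDiag.mul {α : Type*} [NonUnitalNonAssocSemiring α] {A B : Matrix n n α}
    (hA : A.IsDiag) (hB : B.IsDiag) : (A * B).IsDiag := by
  rw [← hA.diagonal_diag, ← hB.diagonal_diag, diagonal_mul_diagonal]
  exact isDiag_diagonal _

theorem IsDiag.exp {𝔸 : Type*} [Ring 𝔸] [TopologicalSpace 𝔸] [IsTopologicalRing 𝔸] [T2Space 𝔸]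
    [Algebra ℚ 𝔸] {A : Matrix n n 𝔸} (hA : A.IsDiag) : (NormedSpace.exp A).IsDiag := by
  rw [← hA.diagonal_diag, exp_diagonal]
  exact isDiag_diagonal _

theorem PosDef.isUnit_one_add_mul {𝕜 : Type*} [RCLike 𝕜] {A B : Matrix n n 𝕜}
    (hA : A.PosDef) (hB : B.PosSemidef) : IsUnit (1 + B * A) := by
  rw [isUnit_iff_isUnit_det, isUnit_iff_ne_zero, Ne, ← exists_mulVec_eq_zero_iff]
  rintro ⟨v, hv, hker⟩
  have hv_eq : v = -(B *ᵥ (A *ᵥ v)) := by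
    rw [add_mulVec, one_mulVec, ← mulVec_mulVec] at hker
    exact eq_neg_of_add_eq_zero_left hker
  have hform : star v ⬝ᵥ (A *ᵥ v) = -(star (A *ᵥ v) ⬝ᵥ (B *ᵥ (A *ᵥ v))) :=
    calc star v ⬝ᵥ (A *ᵥ v) = star (A *ᵥ v) ⬝ᵥ v := by
          rw [dotProduct_mulVec, star_mulVec, hA.isHermitian.eq]
      _ = star (A *ᵥ v) ⬝ᵥ -(B *ᵥ (A *ᵥ v)) := congrArg _ hv_eq
      _ = -(star (A *ᵥ v) ⬝ᵥ (B *ᵥ (A *ᵥ v))) := dotProduct_neg _ _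
  have hpos := hA.dotProduct_mulVec_pos hv
  rw [hform, Left.neg_pos_iff] at hpos
  exact (hB.dotProduct_mulVec_nonneg (A *ᵥ v)).not_gt hpos

end Matrix

theorem exists_sum_pow_mul_ne_zero_of_injective {R : Type*} [CommRing R] [IsDomain R] {m : ℕ}
    {ζ x : Fin m → R} (hζ : Function.Injective ζ) (hx : x ≠ 0) :
    ∃ k : ℕ, ∑ l, ζ l ^ k * x l ≠ 0 := by
  by_contra! h
  have hker : (vandermonde ζ)ᵀ *ᵥ x = 0 := funext fun k => by
    simpa [mulVec, dotProduct, vandermonde] using h k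
  have hdet := exists_mulVec_eq_zero_iff.mp ⟨x, hx, hker⟩
  rw [det_transpose] at hdet
  exact det_vandermonde_ne_zero_iff.mpr hζ hdet

theorem mconj_eq_transpose_conjTranspose {a b : Type*} (A : Matrix a b ℂ) : mconj A = Aᴴᵀ := by
  ext
  rfl

theorem Matrix.IsDiag.mconj_eq_conjTranspose {n : Type*} {A : Matrix n n ℂ} (hA : A.IsDiag) :
    mconj A = Aᴴ := by
  rw [mconj_eq_transpose_conjTranspose, hA.conjTranspose.isSymm]

theorem Matrix.PosSemidef.mconj {n : Type*} [Fintype n] {A : Matrix n n ℂ} (hA : A.PosSemidef) :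
    (mconj A).PosSemidef := by
  rw [mconj_eq_transpose_conjTranspose]
  exact hA.conjTranspose.transpose

section SzegoKernel

variable {n : Type*}

noncomputable def szegoKernel (ζ : n → ℂ) : Matrix n n ℂ :=
  of fun j l => (1 - star (ζ j) * ζ l)⁻¹

theorem szegoKernel_isHermitian (ζ : n → ℂ) : (szegoKernel ζ).IsHermitian := by
  ext j l
  simp [szegoKernel, mul_comm]

theorem hasSum_normSq_szegoKernel [Fintype n] {ζ : n → ℂ} (hζ : ∀ j, ‖ζ j‖ < 1) (x : n → ℂ) :
    HasSum (fun k : ℕ => (Complex.normSq (∑ l, ζ l ^ k * x l) : ℂ))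
      (star x ⬝ᵥ (szegoKernel ζ *ᵥ x)) := by
  have hterm (j l : n) : HasSum (fun k : ℕ => star (x j) * (star (ζ j) * ζ l) ^ k * x l)
      (star (x j) * szegoKernel ζ j l * x l) := by
    have hlt : ‖star (ζ j) * ζ l‖ < 1 := by
      rw [norm_mul, norm_star]
      exact mul_lt_one_of_nonneg_of_lt_one_left (norm_nonneg _) (hζ j) (hζ l).le
    exact ((hasSum_geometric_of_norm_lt_one hlt).mul_left _).mul_right _
  have hquad : star x ⬝ᵥ (szegoKernel ζ *ᵥ x) = ∑ j, ∑ l, star (x j) * szegoKernel ζ j l * x l := by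
    simp only [dotProduct, mulVec, Finset.mul_sum, mul_assoc]
    rfl
  have hnormSq (k : ℕ) : (Complex.normSq (∑ l, ζ l ^ k * x l) : ℂ)
      = ∑ j, ∑ l, star (x j) * (star (ζ j) * ζ l) ^ k * x l := by
    rw [Complex.normSq_eq_conj_mul_self, map_sum, Finset.sum_mul_sum]
    refine Finset.sum_congr rfl fun j _ => Finset.sum_congr rfl fun l _ => ?_
    simp only [map_mul, map_pow, Complex.star_def]
    ring
  simp only [hquad, hnormSq]
  exact hasSum_sum fun j _ => hasSum_sum fun l _ => hterm j l

theorem posDef_szegoKernel {m : ℕ} {ζ : Fin m → ℂ} (hinj : Function.Injective ζ)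
    (hζ : ∀ j, ‖ζ j‖ < 1) : (szegoKernel ζ).PosDef := by
  refine PosDef.of_dotProduct_mulVec_pos (szegoKernel_isHermitian ζ) fun x hx => ?_
  obtain ⟨k, hk⟩ := exists_sum_pow_mul_ne_zero_of_injective hinj hx
  have hsum := hasSum_normSq_szegoKernel hζ x
  have hsummable := Complex.summable_ofReal.mp hsum.summable
  rw [hsum.unique (Complex.hasSum_ofReal.mpr hsummable.hasSum), Complex.zero_lt_real]
  exact hsummable.tsum_pos (fun k => Complex.normSq_nonneg _) k (Complex.normSq_pos.mpr hk)

end SzegoKernel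

noncomputable def cayley (w : ℂ) : ℂ := (w - 1) / (w + 1)

theorem add_one_ne_zero_of_re_pos {w : ℂ} (hw : 0 < w.re) : w + 1 ≠ 0 :=
  Complex.ne_zero_of_re_pos (by simp; linarith)

theorem norm_cayley_lt_one {w : ℂ} (hw : 0 < w.re) : ‖cayley w‖ < 1 := by
  rw [cayley, norm_div, div_lt_one (norm_pos_iff.mpr (add_one_ne_zero_of_re_pos hw))]
  apply lt_of_pow_lt_pow_left₀ 2 (norm_nonneg _)
  simp only [Complex.sq_norm, Complex.normSq_apply, Complex.sub_re, Complex.add_re,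
    Complex.sub_im, Complex.add_im, Complex.one_re, Complex.one_im]
  nlinarith

theorem cayley_injOn : Set.InjOn cayley {w | 0 < w.re} := by
  intro a ha b hb h
  rw [cayley, cayley, div_eq_div_iff (add_one_ne_zero_of_re_pos ha)
    (add_one_ne_zero_of_re_pos hb)] at h
  linear_combination h / 2

theorem star_cayley (w : ℂ) : star (cayley w) = cayley (star w) := by
  simp [cayley]

theorem one_sub_cayley_mul_cayley {a b : ℂ} (ha : a + 1 ≠ 0) (hb : b + 1 ≠ 0) :
    1 - cayley a * cayley b = 2 * (a + b) / ((a + 1) * (b + 1)) := by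
  rw [cayley, cayley]
  field_simp
  ring

theorem cauchy_eq_smul_szegoKernel {m : ℕ} {s : Fin m → ℂ} (hre : ∀ j, 0 < (s j).re) :
    of (fun j l => 1 / (s j + starRingEnd ℂ (s l))) =
      (2 : ℝ) • (diagonal (fun j => (s j + 1)⁻¹) * szegoKernel (fun j => cayley (star (s j))) *
        (diagonal (fun j => (s j + 1)⁻¹))ᴴ) := by
  ext j l
  have hj := add_one_ne_zero_of_re_pos (hre j)
  have hl : starRingEnd ℂ (s l) + 1 ≠ 0 := add_one_ne_zero_of_re_pos (by simpa using hre l)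
  have hjl : s j + starRingEnd ℂ (s l) ≠ 0 :=
    Complex.ne_zero_of_re_pos (by simp; linarith [hre j, hre l])
  simp only [Matrix.smul_apply, diagonal_conjTranspose, mul_diagonal, diagonal_mul, szegoKernel,
    of_apply, Pi.star_apply, star_inv₀, star_add, star_one, star_cayley, star_star]
  rw [Complex.star_def, one_sub_cayley_mul_cayley hj hl, Complex.real_smul]
  push_cast
  field_simp

theorem posDef_cauchy {m : ℕ} {s : Fin m → ℂ} (hs : Function.Injective s)
    (hre : ∀ j, 0 < (s j).re) : (of fun j l => 1 / (s j + starRingEnd ℂ (s l))).PosDef := by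
  have hζ : Function.Injective fun j => cayley (star (s j)) := fun j l h =>
    hs (star_injective (cayley_injOn (by simpa using hre j) (by simpa using hre l) h))
  have hunit : IsUnit (diagonal fun j => (s j + 1)⁻¹) := isUnit_diagonal.mpr <|
    Pi.isUnit_iff.mpr fun j => (inv_ne_zero (add_one_ne_zero_of_re_pos (hre j))).isUnit
  rw [cauchy_eq_smul_szegoKernel hre]
  refine PosDef.smul ?_ two_pos
  exact (posDef_szegoKernel hζ fun j => norm_cayley_lt_one (by simpa using hre j))
    |>.mul_mul_conjTranspose_same (vecMul_injective_of_isUnit hunit)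

theorem focusing_NLS_soliton_regularity_general
    {n : ℕ} (s : Fin n → ℂ)
    (hdist : Function.Injective s)
    (hre : ∀ j : Fin n, 0 < (s j).re)
    (K : Matrix (Fin n) (Fin n) ℂ)
    (hK : ∀ j l : Fin n, K j l = 1 / (s j + (starRingEnd ℂ) (s l)))
    (C : Matrix (Fin n) (Fin n) ℂ)
    (hCdiag : C.IsDiag)
    (Ξ : ℝ → ℝ → Matrix (Fin n) (Fin n) ℂ)
    (hΞ : ∀ x t : ℝ,
      Ξ x t = C * NormedSpace.exp
        ((-(x : ℂ)) • Matrix.diagonal s - (Complex.I * t) • (Matrix.diagonal s * Matrix.diagonal s))) :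
    ∀ x t : ℝ, IsUnit (1 + mconj (Ξ x t) * mconj K * Ξ x t * K) := by
  intro x t
  have hKpos : K.PosDef := by
    rw [show K = _ from Matrix.ext hK]
    exact posDef_cauchy hdist hre
  have hΞdiag : (Ξ x t).IsDiag := by
    rw [hΞ x t]
    have hS := isDiag_diagonal s
    exact hCdiag.mul ((hS.smul _).sub ((hS.mul hS).smul _)).exp
  rw [hΞdiag.mconj_eq_conjTranspose]
  exact hKpos.isUnit_one_add_mul (hKpos.posSemidef.mconj.conjTranspose_mul_mul_same _)

/-- Regularity of the soliton solutions of the focusing scalar NLS equation: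
the matrix `I + Ξ* K* Ξ K` is invertible for all `(x,t)`. -/
theorem focusing_NLS_soliton_regularity
    {n : ℕ} (s : Fin n → ℂ)
    (hdist : Function.Injective s)
    (hre : ∀ j : Fin n, 0 < (s j).re)
    (K : Matrix (Fin n) (Fin n) ℂ)
    (hK : ∀ j l : Fin n, K j l = 1 / (s j + (starRingEnd ℂ) (s l)))
    (C : Matrix (Fin n) (Fin n) ℂ)
    (hCdiag : C.IsDiag) (hCunit : IsUnit C)
    (Ξ : ℝ → ℝ → Matrix (Fin n) (Fin n) ℂ)
    (hΞ : ∀ x t : ℝ,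
      Ξ x t = C * NormedSpace.exp
        ((-(x : ℂ)) • Matrix.diagonal s - (Complex.I * t) • (Matrix.diagonal s * Matrix.diagonal s))) :
    ∀ x t : ℝ, IsUnit (1 + mconj (Ξ x t) * mconj K * Ξ x t * K) :=
  focusing_NLS_soliton_regularity_general s hdist hre K hK C hCdiag Ξ hΞ
end

section
/- Let m, n be positive integers, let s₁, …, s_n ∈ ℂ satisfy s_j + conj(s_l) ≠ 0 for all j, l, and let u₁, …, u_n and v₁, …, v_n be column vectors in ℂᵐ. Define k_{jl} = (v_jᵀ u_l)/(s_j + conj(s_l)). Fix i with 1 ≤ i ≤ n and assume the (i−1)×(i−1) matrix K₁ = (k_{jl})_{1 ≤ j,l ≤ i−1} is invertible. Define u_i⁽⁻⁾ = u_i − Σ_{j,l=1}^{i−1} u_j (K₁⁻¹)_{jl} k_{li} and v_i⁽⁻⁾ = v_i − Σ_{j,l=1}^{i−1} k_{ij} (K₁⁻¹)_{jl} v_l. Then (v_i⁽⁻⁾)ᵀ u_i⁽⁻⁾ = (s_i + conj(s_i)) · (k_{ii} − Σ_{j,l=1}^{i−1} k_{ij} (K₁⁻¹)_{jl} k_{li});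 equivalently, since v_iᵀ u_i = (s_i + conj(s_i)) k_{ii}, one has k_{ii} · (v_i⁽⁻⁾)ᵀ u_i⁽⁻⁾ = (L₂)_{ii} · v_iᵀ u_i, where (L₂)_{ii} = k_{ii} − Σ_{j,l=1}^{i−1} k_{ij} (K₁⁻¹)_{jl} k_{li} is the (i,i)-entry of the Schur complement of K₁ in (k_{jl})_{1 ≤ j,l ≤ n}. -/
open Matrix

/-- Asymptotic normalisation identity (continuous NLS case):
`(v_i⁻)ᵀ u_i⁻ = (s_i + conj s_i) · (L₂)_{ii}` where `(L₂)_{ii}` is the `(i,i)` entry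
of the Schur complement of `K₁`. -/
theorem cc_asymptotic_normalisation_continuous
    {m n : ℕ} (hm : 0 < m) (hn : 0 < n)
    (s : Fin n → ℂ)
    (hs : ∀ j l : Fin n, s j + (starRingEnd ℂ) (s l) ≠ 0)
    (u v : Fin n → Fin m → ℂ)
    (k : Fin n → Fin n → ℂ)
    (hk : ∀ j l : Fin n,
      k j l = (∑ a : Fin m, v j a * u l a) / (s j + (starRingEnd ℂ) (s l)))
    (i : Fin n)
    (K1 : Matrix (Fin (i : ℕ)) (Fin (i : ℕ)) ℂ)
    (hK1 : ∀ a b : Fin (i : ℕ),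
      K1 a b = k (Fin.castLE i.isLt.le a) (Fin.castLE i.isLt.le b))
    (hK1inv : IsUnit K1)
    (um vm : Fin m → ℂ)
    (hum : ∀ a : Fin m,
      um a = u i a - ∑ j : Fin (i : ℕ), ∑ l : Fin (i : ℕ),
        K1⁻¹ j l * k (Fin.castLE i.isLt.le l) i * u (Fin.castLE i.isLt.le j) a)
    (hvm : ∀ a : Fin m,
      vm a = v i a - ∑ j : Fin (i : ℕ), ∑ l : Fin (i : ℕ),
        k i (Fin.castLE i.isLt.le j) * K1⁻¹ j l * v (Fin.castLE i.isLt.le l) a) :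
    (∑ a : Fin m, vm a * um a)
      = (s i + (starRingEnd ℂ) (s i))
        * (k i i - ∑ j : Fin (i : ℕ), ∑ l : Fin (i : ℕ),
            k i (Fin.castLE i.isLt.le j) * K1⁻¹ j l * k (Fin.castLE i.isLt.le l) i) ∧
    k i i * (∑ a : Fin m, vm a * um a)
      = (k i i - ∑ j : Fin (i : ℕ), ∑ l : Fin (i : ℕ),
            k i (Fin.castLE i.isLt.le j) * K1⁻¹ j l * k (Fin.castLE i.isLt.le l) i)
        * (∑ a : Fin m, v i a * u i a) := by
  classical
  set c : Fin (i : ℕ) → Fin n := Fin.castLE i.isLt.le with hc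
  have hdet := (Matrix.isUnit_iff_isUnit_det K1).mp hK1inv
  have hmul : ∀ l p : Fin (i : ℕ),
      (∑ j, K1 l j * K1⁻¹ j p) = if l = p then 1 else 0 := by
    intro l p
    have := congrFun (congrFun (Matrix.mul_nonsing_inv K1 hdet) l) p
    simpa [Matrix.mul_apply, Matrix.one_apply] using this
  have hmul' : ∀ p j : Fin (i : ℕ),
      (∑ l, K1⁻¹ p l * K1 l j) = if p = j then 1 else 0 := by
    intro p j
    have := congrFun (congrFun (Matrix.nonsing_inv_mul K1 hdet) p) j
    simpa [Matrix.mul_apply, Matrix.one_apply] using this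
  have hvu : ∀ j l : Fin n,
      (∑ a, v j a * u l a) = (s j + (starRingEnd ℂ) (s l)) * k j l := by
    intro j l
    rw [hk]
    rw [mul_div_cancel₀ _ (hs j l)]
  set P : Fin (i : ℕ) → ℂ := fun j => ∑ p, K1⁻¹ j p * k (c p) i with hP
  set B : Fin (i : ℕ) → ℂ := fun l => ∑ j, k i (c j) * K1⁻¹ j l with hB
  have hF1 : ∀ l, (∑ j, K1 l j * P j) = k (c l) i := by
    intro l
    calc (∑ j, K1 l j * P j)
        = ∑ p, (∑ j, K1 l j * K1⁻¹ j p) * k (c p) i := by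
          simp only [hP, Finset.mul_sum, Finset.sum_mul, mul_assoc]
          exact Finset.sum_comm
      _ = k (c l) i := by simp [hmul, ite_mul]
  have hF2 : ∀ j, (∑ l, B l * K1 l j) = k i (c j) := by
    intro j
    calc (∑ l, B l * K1 l j)
        = ∑ p, k i (c p) * (∑ l, K1⁻¹ p l * K1 l j) := by
          simp only [hB, Finset.mul_sum, Finset.sum_mul, mul_assoc]
          exact Finset.sum_comm
      _ = k i (c j) := by simp [hmul', mul_ite]
  have hum' : ∀ a, um a = u i a - ∑ j, P j * u (c j) a := by
    intro a
    rw [hum a]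
    congr 1
    simp only [hP, Finset.sum_mul]
  have hvm' : ∀ a, vm a = v i a - ∑ l, B l * v (c l) a := by
    intro a
    rw [hvm a]
    congr 1
    rw [Finset.sum_comm]
    simp only [hB, Finset.sum_mul]
  -- expand the product pointwise
  have expand : ∀ a, vm a * um a =
      v i a * u i a
      - (∑ j, P j * (v i a * u (c j) a))
      - (∑ l, B l * (v (c l) a * u i a))
      + ∑ l, ∑ j, B l * P j * (v (c l) a * u (c j) a) := by
    intro a
    have e1 : v i a * (∑ j, P j * u (c j) a) = ∑ j, P j * (v i a * u (c j) a) := by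
      rw [Finset.mul_sum]; exact Finset.sum_congr rfl fun _ _ => by ring
    have e2 : (∑ l, B l * v (c l) a) * u i a = ∑ l, B l * (v (c l) a * u i a) := by
      rw [Finset.sum_mul]; exact Finset.sum_congr rfl fun _ _ => by ring
    have e3 : (∑ l, B l * v (c l) a) * (∑ j, P j * u (c j) a)
        = ∑ l, ∑ j, B l * P j * (v (c l) a * u (c j) a) := by
      rw [Finset.sum_mul]
      refine Finset.sum_congr rfl fun l _ => ?_
      rw [Finset.mul_sum]
      exact Finset.sum_congr rfl fun j _ => by ring
    calc vm a * um a
        = v i a * u i a - v i a * (∑ j, P j * u (c j) a)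
          - (∑ l, B l * v (c l) a) * u i a
          + (∑ l, B l * v (c l) a) * (∑ j, P j * u (c j) a) := by
          rw [hvm' a, hum' a]; ring
      _ = _ := by rw [e1, e2, e3]
  set D : Fin n → Fin n → ℂ := fun x y => ∑ a, v x a * u y a with hD
  have hdot : (∑ a, vm a * um a) =
      D i i - (∑ j, P j * D i (c j)) - (∑ l, B l * D (c l) i)
      + ∑ l, ∑ j, B l * P j * D (c l) (c j) := by
    simp only [expand]
    rw [Finset.sum_add_distrib, Finset.sum_sub_distrib, Finset.sum_sub_distrib]
    congr 1
    · congr 1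
      · congr 1
        rw [Finset.sum_comm]
        exact Finset.sum_congr rfl fun j _ => by rw [← Finset.mul_sum]
      · rw [Finset.sum_comm]
        exact Finset.sum_congr rfl fun l _ => by rw [← Finset.mul_sum]
    · rw [Finset.sum_comm]
      refine Finset.sum_congr rfl fun l _ => ?_
      rw [Finset.sum_comm]
      exact Finset.sum_congr rfl fun j _ => by rw [← Finset.mul_sum]
  -- rewrite the dot products via hvu and hK1
  have hDcc : ∀ l j : Fin (i : ℕ),
      D (c l) (c j) = (s (c l) + (starRingEnd ℂ) (s (c j))) * K1 l j := by
    intro l j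
    rw [hD]
    simp only
    rw [hvu, hK1]
  have hQ : (∑ j : Fin (i : ℕ), ∑ l : Fin (i : ℕ),
      k i (c j) * K1⁻¹ j l * k (c l) i) = ∑ j, k i (c j) * P j := by
    refine Finset.sum_congr rfl fun j _ => ?_
    rw [hP]
    simp only
    rw [Finset.mul_sum]
    exact Finset.sum_congr rfl fun l _ => by ring
  -- split term 4
  have hT4 : (∑ l, ∑ j, B l * P j * D (c l) (c j))
      = (∑ l, B l * ((s (c l) + (starRingEnd ℂ) (s i)) * k (c l) i))
        + (∑ j, P j * ((s i + (starRingEnd ℂ) (s (c j))) * k i (c j)))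
        - (s i + (starRingEnd ℂ) (s i)) * (∑ j, k i (c j) * P j) := by
    have e : ∀ l j, B l * P j * D (c l) (c j)
        = B l * ((s (c l) + (starRingEnd ℂ) (s i)) * (K1 l j * P j))
          + P j * ((s i + (starRingEnd ℂ) (s (c j))) * (B l * K1 l j))
          - (s i + (starRingEnd ℂ) (s i)) * ((B l * K1 l j) * P j) := by
      intro l j
      rw [hDcc]
      ring
    simp only [e, Finset.sum_add_distrib, Finset.sum_sub_distrib]
    congr 1
    · congr 1
      · refine Finset.sum_congr rfl fun l _ => ?_
        rw [← Finset.mul_sum, ← Finset.mul_sum, hF1]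
      · rw [Finset.sum_comm]
        refine Finset.sum_congr rfl fun j _ => ?_
        rw [← Finset.mul_sum, ← Finset.mul_sum, hF2]
    · rw [Finset.sum_comm, Finset.mul_sum]
      refine Finset.sum_congr rfl fun j _ => ?_
      rw [← Finset.mul_sum, ← Finset.sum_mul, hF2]
  have hfirst : (∑ a, vm a * um a)
      = (s i + (starRingEnd ℂ) (s i))
        * (k i i - ∑ j : Fin (i : ℕ), ∑ l : Fin (i : ℕ),
            k i (c j) * K1⁻¹ j l * k (c l) i) := by
    rw [hdot, hT4, hQ]
    have hDii : D i i = (s i + (starRingEnd ℂ) (s i)) * k i i := hvu i i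
    have hDic : ∀ j, D i (c j) = (s i + (starRingEnd ℂ) (s (c j))) * k i (c j) :=
      fun j => hvu i (c j)
    have hDci : ∀ l, D (c l) i = (s (c l) + (starRingEnd ℂ) (s i)) * k (c l) i :=
      fun l => hvu (c l) i
    rw [hDii]
    rw [show (∑ j, P j * D i (c j))
        = ∑ j, P j * ((s i + (starRingEnd ℂ) (s (c j))) * k i (c j)) from
      Finset.sum_congr rfl fun j _ => by rw [hDic]]
    rw [show (∑ l, B l * D (c l) i)
        = ∑ l, B l * ((s (c l) + (starRingEnd ℂ) (s i)) * k (c l) i) from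
      Finset.sum_congr rfl fun l _ => by rw [hDci]]
    ring
  refine ⟨hfirst, ?_⟩
  rw [hfirst, hvu i i]
  ring
end

section
/- Let m, n be positive integers, let s₁, …, s_n be nonzero complex numbers with 1 − s_j · conj(s_l) ≠ 0 for all j, l, and let u₁, …, u_n and v₁, …, v_n be column vectors in ℂᵐ. Define k_{jl} = (v_jᵀ u_l)/(1 − s_j · conj(s_l)). Fix i with 1 ≤ i ≤ n and assume the (i−1)×(i−1) matrix K₁ = (k_{jl})_{1 ≤ j,l ≤ i−1} is invertible. Define u_i⁽⁻⁾ = u_i − Σ_{j,l=1}^{i−1} u_j (K₁⁻¹)_{jl} k_{li} and v_i⁽⁻⁾ = v_i − s_i · Σ_{j,l=1}^{i−1} k_{ij} (K₁⁻¹)_{jl} s_l⁻¹ v_l. Then (v_i⁽⁻⁾)ᵀ u_i⁽⁻⁾ = (1 − s_i · conj(s_i)) · (k_{ii} − Σ_{j,l=1}^{i−1} k_{ij} (K₁⁻¹)_{jl} k_{li}). -/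
open Matrix

private lemma aux_A_mul_double {m I : ℕ} (A : Fin m → ℂ) (f : Fin I → Fin I → ℂ)
    (W : Fin I → Fin m → ℂ) :
    (∑ a : Fin m, A a * ∑ j : Fin I, ∑ l : Fin I, f j l * W j a)
      = ∑ j : Fin I, ∑ l : Fin I, f j l * ∑ a : Fin m, A a * W j a := by
  simp only [Finset.mul_sum]
  rw [Finset.sum_comm]
  refine Finset.sum_congr rfl fun j _ => ?_
  rw [Finset.sum_comm]
  exact Finset.sum_congr rfl fun l _ => Finset.sum_congr rfl fun a _ => by ring

private lemma aux_double_mul_B {m I : ℕ} (B : Fin m → ℂ) (f : Fin I → Fin I → ℂ)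
    (V : Fin I → Fin m → ℂ) :
    (∑ a : Fin m, (∑ j : Fin I, ∑ l : Fin I, f j l * V l a) * B a)
      = ∑ j : Fin I, ∑ l : Fin I, f j l * ∑ a : Fin m, V l a * B a := by
  simp only [Finset.sum_mul, Finset.mul_sum]
  rw [Finset.sum_comm]
  refine Finset.sum_congr rfl fun j _ => ?_
  rw [Finset.sum_comm]
  exact Finset.sum_congr rfl fun l _ => Finset.sum_congr rfl fun a _ => by ring

private lemma aux_double_mul_double {m I : ℕ} (f g : Fin I → Fin I → ℂ)
    (V W : Fin I → Fin m → ℂ) :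
    (∑ a : Fin m,
        (∑ j : Fin I, ∑ l : Fin I, f j l * V l a) * ∑ p : Fin I, ∑ q : Fin I, g p q * W p a)
      = ∑ j : Fin I, ∑ l : Fin I, ∑ p : Fin I, ∑ q : Fin I,
          f j l * g p q * ∑ a : Fin m, V l a * W p a := by
  calc (∑ a : Fin m,
        (∑ j : Fin I, ∑ l : Fin I, f j l * V l a) * ∑ p : Fin I, ∑ q : Fin I, g p q * W p a)
      = ∑ j : Fin I, ∑ l : Fin I,
          f j l * ∑ a : Fin m, V l a * ∑ p : Fin I, ∑ q : Fin I, g p q * W p a :=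
        aux_double_mul_B _ _ _
    _ = ∑ j : Fin I, ∑ l : Fin I,
          f j l * ∑ p : Fin I, ∑ q : Fin I, g p q * ∑ a : Fin m, V l a * W p a :=
        Finset.sum_congr rfl fun j _ => Finset.sum_congr rfl fun l _ =>
          congrArg _ (aux_A_mul_double (V l) g W)
    _ = ∑ j : Fin I, ∑ l : Fin I, ∑ p : Fin I, ∑ q : Fin I,
          f j l * g p q * ∑ a : Fin m, V l a * W p a := by
        refine Finset.sum_congr rfl fun j _ => Finset.sum_congr rfl fun l _ => ?_
        rw [Finset.mul_sum]
        refine Finset.sum_congr rfl fun p _ => ?_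
        rw [Finset.mul_sum]
        exact Finset.sum_congr rfl fun q _ => by ring

private lemma contract_right {I : ℕ} {M N : Matrix (Fin I) (Fin I) ℂ} (h : M * N = 1)
    (a : ℂ) (w : Fin I → ℂ) (l : Fin I) :
    ∑ p : Fin I, ∑ q : Fin I, a * (M l p * (N p q * w q)) = a * w l := by
  have h1 : ∀ q, ∑ p, M l p * (N p q * w q) = (M * N) l q * w q := by
    intro q; rw [Matrix.mul_apply, Finset.sum_mul]
    exact Finset.sum_congr rfl fun p _ => by ring
  calc ∑ p : Fin I, ∑ q : Fin I, a * (M l p * (N p q * w q))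
      = a * ∑ p : Fin I, ∑ q : Fin I, M l p * (N p q * w q) := by
        rw [Finset.mul_sum]
        exact Finset.sum_congr rfl fun p _ => by rw [Finset.mul_sum]
    _ = a * ∑ q : Fin I, ∑ p : Fin I, M l p * (N p q * w q) := by rw [Finset.sum_comm]
    _ = a * ∑ q : Fin I, (M * N) l q * w q := by simp only [h1]
    _ = a * w l := by rw [h]; simp [Matrix.one_apply]

private lemma contract_left {I : ℕ} {M N : Matrix (Fin I) (Fin I) ℂ} (h : M * N = 1)
    (a : ℂ) (C : Fin I → Fin I → ℂ) (j : Fin I) :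
    ∑ l : Fin I, ∑ p : Fin I, ∑ q : Fin I, a * (M j l * (N l p * C p q))
      = ∑ q : Fin I, a * C j q := by
  have h2 : ∀ l p, ∑ q, M j l * (N l p * C p q) = M j l * N l p * ∑ q, C p q := by
    intro l p; rw [Finset.mul_sum]
    exact Finset.sum_congr rfl fun q _ => by ring
  calc ∑ l : Fin I, ∑ p : Fin I, ∑ q : Fin I, a * (M j l * (N l p * C p q))
      = a * ∑ l : Fin I, ∑ p : Fin I, ∑ q : Fin I, M j l * (N l p * C p q) := by
        rw [Finset.mul_sum]
        refine Finset.sum_congr rfl fun l _ => ?_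
        rw [Finset.mul_sum]
        exact Finset.sum_congr rfl fun p _ => by rw [Finset.mul_sum]
    _ = a * ∑ l : Fin I, ∑ p : Fin I, M j l * N l p * ∑ q : Fin I, C p q := by
        simp only [h2]
    _ = a * ∑ p : Fin I, ∑ l : Fin I, M j l * N l p * ∑ q : Fin I, C p q := by
        rw [Finset.sum_comm]
    _ = a * ∑ p : Fin I, (M * N) j p * ∑ q : Fin I, C p q := by
        refine congrArg _ (Finset.sum_congr rfl fun p _ => ?_)
        rw [← Finset.sum_mul, ← Matrix.mul_apply]
    _ = ∑ q : Fin I, a * C j q := by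
        rw [h]
        simp [Matrix.one_apply, Finset.mul_sum]

set_option maxHeartbeats 1000000 in
/-- Asymptotic normalisation identity (discrete NLS case):
`(v_i⁻)ᵀ u_i⁻ = (1 − s_i · conj s_i) · (L₂)_{ii}` where `(L₂)_{ii}` is the `(i,i)`
entry of the Schur complement of `K₁`. -/
theorem cc_asymptotic_normalisation_discrete
    {m n : ℕ} (hm : 0 < m) (hn : 0 < n)
    (s : Fin n → ℂ)
    (hs0 : ∀ j : Fin n, s j ≠ 0)
    (hs : ∀ j l : Fin n, 1 - s j * (starRingEnd ℂ) (s l) ≠ 0)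
    (u v : Fin n → Fin m → ℂ)
    (k : Fin n → Fin n → ℂ)
    (hk : ∀ j l : Fin n,
      k j l = (∑ a : Fin m, v j a * u l a) / (1 - s j * (starRingEnd ℂ) (s l)))
    (i : Fin n)
    (K1 : Matrix (Fin (i : ℕ)) (Fin (i : ℕ)) ℂ)
    (hK1 : ∀ a b : Fin (i : ℕ),
      K1 a b = k (Fin.castLE i.isLt.le a) (Fin.castLE i.isLt.le b))
    (hK1inv : IsUnit K1)
    (um vm : Fin m → ℂ)
    (hum : ∀ a : Fin m,
      um a = u i a - ∑ j : Fin (i : ℕ), ∑ l : Fin (i : ℕ),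
        K1⁻¹ j l * k (Fin.castLE i.isLt.le l) i * u (Fin.castLE i.isLt.le j) a)
    (hvm : ∀ a : Fin m,
      vm a = v i a - s i * ∑ j : Fin (i : ℕ), ∑ l : Fin (i : ℕ),
        k i (Fin.castLE i.isLt.le j) * K1⁻¹ j l * (s (Fin.castLE i.isLt.le l))⁻¹
          * v (Fin.castLE i.isLt.le l) a) :
    (∑ a : Fin m, vm a * um a)
      = (1 - s i * (starRingEnd ℂ) (s i))
        * (k i i - ∑ j : Fin (i : ℕ), ∑ l : Fin (i : ℕ),
            k i (Fin.castLE i.isLt.le j) * K1⁻¹ j l * k (Fin.castLE i.isLt.le l) i) := by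
  have hdet : IsUnit K1.det := (Matrix.isUnit_iff_isUnit_det K1).mp hK1inv
  have hMul : K1 * K1⁻¹ = 1 := Matrix.mul_nonsing_inv K1 hdet
  have hMul' : K1⁻¹ * K1 = 1 := Matrix.nonsing_inv_mul K1 hdet
  set c : Fin (i : ℕ) → Fin n := Fin.castLE i.isLt.le with hc
  have huv : ∀ j l : Fin n,
      (∑ a : Fin m, v j a * u l a) = (1 - s j * (starRingEnd ℂ) (s l)) * k j l := by
    intro j l
    rw [hk j l, mul_comm, div_mul_cancel₀ _ (hs j l)]
  have E2 : (∑ a : Fin m, v i a * ∑ j : Fin (i : ℕ), ∑ l : Fin (i : ℕ),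
        K1⁻¹ j l * k (c l) i * u (c j) a)
      = ∑ j : Fin (i : ℕ), ∑ l : Fin (i : ℕ),
          K1⁻¹ j l * k (c l) i * ∑ a : Fin m, v i a * u (c j) a :=
    aux_A_mul_double _ _ _
  have E3 : (∑ a : Fin m, (∑ j : Fin (i : ℕ), ∑ l : Fin (i : ℕ),
        k i (c j) * K1⁻¹ j l * (s (c l))⁻¹ * v (c l) a) * u i a)
      = ∑ j : Fin (i : ℕ), ∑ l : Fin (i : ℕ),
          k i (c j) * K1⁻¹ j l * (s (c l))⁻¹ * ∑ a : Fin m, v (c l) a * u i a :=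
    aux_double_mul_B _ _ _
  have E4 : (∑ a : Fin m, (∑ j : Fin (i : ℕ), ∑ l : Fin (i : ℕ),
        k i (c j) * K1⁻¹ j l * (s (c l))⁻¹ * v (c l) a)
          * ∑ j : Fin (i : ℕ), ∑ l : Fin (i : ℕ), K1⁻¹ j l * k (c l) i * u (c j) a)
      = ∑ j : Fin (i : ℕ), ∑ l : Fin (i : ℕ), ∑ p : Fin (i : ℕ), ∑ q : Fin (i : ℕ),
          k i (c j) * K1⁻¹ j l * (s (c l))⁻¹ * (K1⁻¹ p q * k (c q) i)
            * ∑ a : Fin m, v (c l) a * u (c p) a :=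
    aux_double_mul_double _ _ _ _
  have expand : ∀ a : Fin m, vm a * um a =
      v i a * u i a
      - v i a * ∑ j : Fin (i : ℕ), ∑ l : Fin (i : ℕ),
          K1⁻¹ j l * k (c l) i * u (c j) a
      - s i * ((∑ j : Fin (i : ℕ), ∑ l : Fin (i : ℕ),
          k i (c j) * K1⁻¹ j l * (s (c l))⁻¹ * v (c l) a) * u i a)
      + s i * ((∑ j : Fin (i : ℕ), ∑ l : Fin (i : ℕ),
          k i (c j) * K1⁻¹ j l * (s (c l))⁻¹ * v (c l) a)
            * ∑ j : Fin (i : ℕ), ∑ l : Fin (i : ℕ), K1⁻¹ j l * k (c l) i * u (c j) a) := by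
    intro a
    rw [hvm a, hum a]
    ring
  simp only [expand]
  rw [Finset.sum_add_distrib, Finset.sum_sub_distrib, Finset.sum_sub_distrib,
    ← Finset.mul_sum, ← Finset.mul_sum, E2, E3, E4]
  simp only [huv, ← hK1]
  have P2 : (∑ j : Fin (i : ℕ), ∑ l : Fin (i : ℕ),
        K1⁻¹ j l * k (c l) i * ((1 - s i * (starRingEnd ℂ) (s (c j))) * k i (c j)))
      = (∑ j : Fin (i : ℕ), ∑ l : Fin (i : ℕ), k i (c j) * K1⁻¹ j l * k (c l) i)
        - s i * ∑ j : Fin (i : ℕ), ∑ l : Fin (i : ℕ),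
            k i (c j) * ((starRingEnd ℂ) (s (c j)) * K1⁻¹ j l * k (c l) i) := by
    rw [Finset.mul_sum, ← Finset.sum_sub_distrib]
    refine Finset.sum_congr rfl fun j _ => ?_
    rw [Finset.mul_sum, ← Finset.sum_sub_distrib]
    exact Finset.sum_congr rfl fun l _ => by ring
  have P3 : (∑ j : Fin (i : ℕ), ∑ l : Fin (i : ℕ),
        k i (c j) * K1⁻¹ j l * (s (c l))⁻¹
          * ((1 - s (c l) * (starRingEnd ℂ) (s i)) * k (c l) i))
      = (∑ j : Fin (i : ℕ), ∑ l : Fin (i : ℕ),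
          k i (c j) * K1⁻¹ j l * (s (c l))⁻¹ * k (c l) i)
        - (starRingEnd ℂ) (s i) * ∑ j : Fin (i : ℕ), ∑ l : Fin (i : ℕ),
            k i (c j) * K1⁻¹ j l * k (c l) i := by
    rw [Finset.mul_sum, ← Finset.sum_sub_distrib]
    refine Finset.sum_congr rfl fun j _ => ?_
    rw [Finset.mul_sum, ← Finset.sum_sub_distrib]
    refine Finset.sum_congr rfl fun l _ => ?_
    have h0 : s (c l) ≠ 0 := hs0 (c l)
    field_simp
  have step : ∀ j l p q : Fin (i : ℕ),
      k i (c j) * K1⁻¹ j l * (s (c l))⁻¹ * (K1⁻¹ p q * k (c q) i)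
          * ((1 - s (c l) * (starRingEnd ℂ) (s (c p))) * K1 l p)
        = k i (c j) * K1⁻¹ j l * (s (c l))⁻¹ * (K1 l p * (K1⁻¹ p q * k (c q) i))
          - k i (c j) * (K1⁻¹ j l * (K1 l p
              * ((starRingEnd ℂ) (s (c p)) * K1⁻¹ p q * k (c q) i))) := by
    intro j l p q
    have h0 : s (c l) ≠ 0 := hs0 (c l)
    field_simp
  have P4 : (∑ j : Fin (i : ℕ), ∑ l : Fin (i : ℕ), ∑ p : Fin (i : ℕ), ∑ q : Fin (i : ℕ),
        k i (c j) * K1⁻¹ j l * (s (c l))⁻¹ * (K1⁻¹ p q * k (c q) i)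
          * ((1 - s (c l) * (starRingEnd ℂ) (s (c p))) * K1 l p))
      = (∑ j : Fin (i : ℕ), ∑ l : Fin (i : ℕ),
          k i (c j) * K1⁻¹ j l * (s (c l))⁻¹ * k (c l) i)
        - ∑ j : Fin (i : ℕ), ∑ l : Fin (i : ℕ),
            k i (c j) * ((starRingEnd ℂ) (s (c j)) * K1⁻¹ j l * k (c l) i) := by
    simp only [step, Finset.sum_sub_distrib]
    congr 1
    · exact Finset.sum_congr rfl fun j _ => Finset.sum_congr rfl fun l _ =>
        contract_right hMul _ _ l
    · exact Finset.sum_congr rfl fun j _ => contract_left hMul' _ _ j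
  rw [P2, P3, P4]
  ring
end

section
/- Let ε ∈ {1, −1}. Let S₁ be n₁×n₁, S₂ be n₂×n₂, U₁ be m×n₁, V₁ be n₁×m, A be n₂×n₁, B be n₁×n₂ complex matrices with A S₁ = S₂ A and S₁* B = B S₂*, and let K₁ be an n₁×n₁ matrix solving S₁ K₁ + K₁ S₁* = V₁ U₁. Set U = [U₁ U₁B] (m×(n₁+n₂)), V = [V₁; A V₁] ((n₁+n₂)×m), and let K be the (n₁+n₂)×(n₁+n₂) block matrix with blocks K₁, K₁B, AK₁, AK₁B (which solves S K + K S* = V U for S = blockdiag(S₁,S₂)). For (x,t) ∈ ℝ² set Ξ₁(x,t) = exp(−x S₁ − i t S₁²), Ξ₂(x,t) = exp(−x S₂ − i t S₂²), Ξ = blockdiag(Ξ₁, Ξ₂), and assume C = I + B* A is invertible; set Ξ̃₁ = Ξ₁ C. Then for every (x,t) ∈ ℝ² at which Ξ(x,t)*⁻¹ − ε K* Ξ(x,t) K and Ξ̃₁(x,t)*⁻¹ − ε K₁* Ξ̃₁(x,t) K₁ are invertible, U (Ξ*⁻¹ − ε K* Ξ K)⁻¹ V* = U₁ (Ξ̃₁*⁻¹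 − ε K₁* Ξ̃₁ K₁)⁻¹ V₁*; i.e., the NLS solution determined by the superposed data coincides with the one determined by the data (S₁, U₁ C, V₁). -/
/-!
With `P = [I  B]` and `Q = [I; A]` the superposed data factor as `U = U₁ P`, `V = Q V₁`,
`K = Q K₁ P`. The intertwining relations `A S₁ = S₂ A` and `B* S₂ = S₁ B*` (conjugate of the
hypothesis on `B`) pass to the exponentials, giving `Ξ Q = Q Ξ₁` and `P* Ξ = Ξ₁ P*`; hence
`P* Ξ Q = Ξ₁ C = Ξ̃₁` with `C = P* Q`, and `C` commutes with `Ξ₁`. Writing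
`M = Ξ*⁻¹ - ε K* Ξ K` and `N = Ξ̃₁*⁻¹ - ε K₁* Ξ̃₁ K₁`, this yields `M Q* = Q* N C*` and
`P Q* = C*`, so `P M⁻¹ Q*` is a left inverse of `N`, and
`U M⁻¹ V* = U₁ (P M⁻¹ Q*) V₁* = U₁ N⁻¹ V₁*`.
-/

open Matrix

section exp

variable {𝕂 : Type*} [RCLike 𝕂] {p q : Type*} [Fintype p] [DecidableEq p] [Fintype q]
  [DecidableEq q]

theorem Matrix.mul_pow_eq_pow_mul_of_mul_eq {A : Matrix q p 𝕂} {X : Matrix p p 𝕂}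
    {Y : Matrix q q 𝕂} (h : A * X = Y * A) (n : ℕ) : A * X ^ n = Y ^ n * A := by
  induction n with
  | zero => simp
  | succ n ih =>
    rw [pow_succ, ← Matrix.mul_assoc, ih, Matrix.mul_assoc, h, ← Matrix.mul_assoc, ← pow_succ]

theorem Matrix.mul_exp_eq_exp_mul_of_mul_eq {A : Matrix q p 𝕂} {X : Matrix p p 𝕂}
    {Y : Matrix q q 𝕂} (h : A * X = Y * A) :
    A * NormedSpace.exp X = NormedSpace.exp Y * A := by
  open scoped Norms.Operator in
  have hX := (NormedSpace.exp_series_hasSum_exp' (𝕂 := 𝕂) X).map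
    (mulLeftLinearMap p 𝕂 A) (continuous_const.matrix_mul continuous_id)
  have hY := (NormedSpace.exp_series_hasSum_exp' (𝕂 := 𝕂) Y).map
    (mulRightLinearMap q 𝕂 A) (continuous_id.matrix_mul continuous_const)
  refine hX.unique ?_
  simp only [Function.comp_def, mulRightLinearMap_apply, Matrix.smul_mul] at hY
  simp only [Function.comp_def, mulLeftLinearMap_apply, Matrix.mul_smul,
    mul_pow_eq_pow_mul_of_mul_eq h]
  exact hY

theorem Matrix.mul_exp_quadratic_eq_exp_quadratic_mul {A : Matrix q p 𝕂} {S : Matrix p p 𝕂}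
    {T : Matrix q q 𝕂} (h : A * S = T * A) (a b : 𝕂) :
    A * NormedSpace.exp (a • S - b • (S * S)) = NormedSpace.exp (a • T - b • (T * T)) * A := by
  refine mul_exp_eq_exp_mul_of_mul_eq ?_
  have hsq : A * (S * S) = T * T * A := by
    rw [← Matrix.mul_assoc, h, Matrix.mul_assoc, h, ← Matrix.mul_assoc]
  rw [Matrix.mul_sub, Matrix.sub_mul, Matrix.mul_smul, Matrix.mul_smul, Matrix.smul_mul,
    Matrix.smul_mul, h, hsq]

end exp

section mconj

variable {l m n : Type*}

@[simp]
theorem mconj_mul_s13 [Fintype m] (M : Matrix l m ℂ) (N : Matrix m n ℂ) :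
    mconj (M * N) = mconj M * mconj N :=
  Matrix.map_mul

@[simp]
theorem mconj_one [DecidableEq n] : mconj (1 : Matrix n n ℂ) = 1 :=
  Matrix.map_one _ (map_zero _) (map_one _)

@[simp]
theorem mconj_mconj_s13 (M : Matrix m n ℂ) : mconj (mconj M) = M := by
  ext; simp [mconj]

@[simp]
theorem mconj_fromCols (M : Matrix l m ℂ) (N : Matrix l n ℂ) :
    mconj (fromCols M N) = fromCols (mconj M) (mconj N) :=
  fromCols_map M N _

theorem IsUnit.mconj [Fintype n] [DecidableEq n] {M : Matrix n n ℂ} (h : IsUnit M) :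
    IsUnit (mconj M) :=
  h.map (RingHom.mapMatrix (starRingEnd ℂ))

end mconj

section inverse

variable {R m n : Type*} [CommRing R] [Fintype m] [DecidableEq m] [Fintype n] [DecidableEq n]

theorem Matrix.inv_mul_eq_mul_inv_of_mul_eq {X : Matrix m m R} {Y : Matrix n n R}
    {Q : Matrix m n R} (hX : IsUnit X) (hY : IsUnit Y) (h : X * Q = Q * Y) :
    X⁻¹ * Q = Q * Y⁻¹ :=
  calc X⁻¹ * Q = X⁻¹ * (Q * Y * Y⁻¹) := by
        rw [mul_nonsing_inv_cancel_right _ _ ((isUnit_iff_isUnit_det _).mp hY)]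
    _ = X⁻¹ * (X * Q) * Y⁻¹ := by rw [h]; simp only [Matrix.mul_assoc]
    _ = Q * Y⁻¹ := by rw [nonsing_inv_mul_cancel_left _ _ ((isUnit_iff_isUnit_det _).mp hX)]

theorem Matrix.mul_inv_mul_eq_inv_of_mul_eq {M : Matrix m m R} {N D : Matrix n n R}
    {P : Matrix n m R} {Q : Matrix m n R} (hM : IsUnit M) (hD : IsUnit D) (hPQ : P * Q = D)
    (hMQ : M * Q = Q * N * D) :
    P * M⁻¹ * Q = N⁻¹ := by
  have hleft : P * M⁻¹ * Q * N = 1 := by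
    refine hD.mul_left_injective ?_
    calc P * M⁻¹ * Q * N * D = P * (M⁻¹ * (M * Q)) := by
          rw [hMQ]; simp only [Matrix.mul_assoc]
      _ = 1 * D := by
          rw [nonsing_inv_mul_cancel_left _ _ ((isUnit_iff_isUnit_det _).mp hM), hPQ,
            Matrix.one_mul]
  exact (inv_eq_left_inv hleft).symm

end inverse

noncomputable def nlsDenominator {n : Type*} [Fintype n] [DecidableEq n] (ε : ℂ)
    (Ξ K : Matrix n n ℂ) : Matrix n n ℂ :=
  (mconj Ξ)⁻¹ - ε • (mconj K * Ξ * K)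

theorem mul_inv_nlsDenominator_mul_eq {m n : Type*} [Fintype m] [DecidableEq m] [Fintype n]
    [DecidableEq n] (ε : ℂ) {Ξ : Matrix m m ℂ} {Ξ₁ : Matrix n n ℂ} {P : Matrix n m ℂ}
    {Q : Matrix m n ℂ} (K₁ : Matrix n n ℂ) (hΞ : IsUnit Ξ) (hΞ₁ : IsUnit Ξ₁)
    (hQ : Ξ * Q = Q * Ξ₁) (hP : mconj P * Ξ = Ξ₁ * mconj P) (hC : IsUnit (mconj P * Q))
    (hM : IsUnit (nlsDenominator ε Ξ (Q * K₁ * P))) :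
    P * (nlsDenominator ε Ξ (Q * K₁ * P))⁻¹ * mconj Q
      = (nlsDenominator ε (Ξ₁ * (mconj P * Q)) K₁)⁻¹ := by
  set C := mconj P * Q
  have hPQ : P * mconj Q = mconj C := by simp [C]
  have hPΞQ : mconj P * Ξ * Q = Ξ₁ * C := by rw [hP, Matrix.mul_assoc]
  have hCΞ₁ : C * Ξ₁ = Ξ₁ * C := by rw [← hPΞQ, Matrix.mul_assoc, Matrix.mul_assoc, hQ]
  have hΞinv : (mconj Ξ)⁻¹ * mconj Q = mconj Q * (mconj Ξ₁)⁻¹ :=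
    inv_mul_eq_mul_inv_of_mul_eq hΞ.mconj hΞ₁.mconj (by simpa using congrArg mconj hQ)
  have hΞ₁inv : (mconj Ξ₁)⁻¹ = (mconj (Ξ₁ * C))⁻¹ * mconj C := by
    rw [← hCΞ₁, mconj_mul_s13, Matrix.mul_inv_rev,
      nonsing_inv_mul_cancel_right _ _ ((isUnit_iff_isUnit_det _).mp hC.mconj)]
  refine mul_inv_mul_eq_inv_of_mul_eq hM hC.mconj hPQ ?_
  calc nlsDenominator ε Ξ (Q * K₁ * P) * mconj Q
      = mconj Q * (mconj Ξ₁)⁻¹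
          - ε • (mconj Q * (mconj K₁ * (mconj P * Ξ * Q) * K₁) * (P * mconj Q)) := by
        rw [nlsDenominator, Matrix.sub_mul, hΞinv]
        simp only [mconj_mul_s13, Matrix.smul_mul, Matrix.mul_assoc]
    _ = mconj Q * nlsDenominator ε (Ξ₁ * C) K₁ * mconj C := by
        rw [hPΞQ, hPQ, hΞ₁inv, nlsDenominator]
        simp only [Matrix.mul_sub, Matrix.sub_mul, Matrix.mul_smul, Matrix.smul_mul,
          Matrix.mul_assoc]

theorem superposition_of_similar_data_general
    {n1 n2 m : ℕ}
    (ε : ℂ)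
    (S1 : Matrix (Fin n1) (Fin n1) ℂ) (S2 : Matrix (Fin n2) (Fin n2) ℂ)
    (U1 : Matrix (Fin m) (Fin n1) ℂ) (V1 : Matrix (Fin n1) (Fin m) ℂ)
    (A : Matrix (Fin n2) (Fin n1) ℂ) (B : Matrix (Fin n1) (Fin n2) ℂ)
    (hA : A * S1 = S2 * A)
    (hB : mconj S1 * B = B * mconj S2)
    (K1 : Matrix (Fin n1) (Fin n1) ℂ)
    (U : Matrix (Fin m) (Fin n1 ⊕ Fin n2) ℂ)
    (hU : U = fromCols U1 (U1 * B))
    (V : Matrix (Fin n1 ⊕ Fin n2) (Fin m) ℂ)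
    (hV : V = fromRows V1 (A * V1))
    (K : Matrix (Fin n1 ⊕ Fin n2) (Fin n1 ⊕ Fin n2) ℂ)
    (hKblocks : K = fromBlocks K1 (K1 * B) (A * K1) (A * K1 * B))
    (Ξ1 : ℝ → ℝ → Matrix (Fin n1) (Fin n1) ℂ)
    (Ξ2 : ℝ → ℝ → Matrix (Fin n2) (Fin n2) ℂ)
    (hΞ1 : ∀ x t : ℝ,
      Ξ1 x t = NormedSpace.exp ((-(x : ℂ)) • S1 - (Complex.I * t) • (S1 * S1)))
    (hΞ2 : ∀ x t : ℝ,
      Ξ2 x t = NormedSpace.exp ((-(x : ℂ)) • S2 - (Complex.I * t) • (S2 * S2)))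
    (Ξ : ℝ → ℝ → Matrix (Fin n1 ⊕ Fin n2) (Fin n1 ⊕ Fin n2) ℂ)
    (hΞ : ∀ x t : ℝ, Ξ x t = fromBlocks (Ξ1 x t) 0 0 (Ξ2 x t))
    (C : Matrix (Fin n1) (Fin n1) ℂ)
    (hC : C = 1 + mconj B * A)
    (hCinv : IsUnit C)
    (Ξt1 : ℝ → ℝ → Matrix (Fin n1) (Fin n1) ℂ)
    (hΞt1 : ∀ x t : ℝ, Ξt1 x t = Ξ1 x t * C) :
    ∀ x t : ℝ,
      IsUnit ((mconj (Ξ x t))⁻¹ - ε • (mconj K * Ξ x t * K)) →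
      IsUnit ((mconj (Ξt1 x t))⁻¹ - ε • (mconj K1 * Ξt1 x t * K1)) →
      U * ((mconj (Ξ x t))⁻¹ - ε • (mconj K * Ξ x t * K))⁻¹ * mconj V
        = U1 * ((mconj (Ξt1 x t))⁻¹ - ε • (mconj K1 * Ξt1 x t * K1))⁻¹ * mconj V1 := by
  intro x t hM _
  set P : Matrix (Fin n1) (Fin n1 ⊕ Fin n2) ℂ := fromCols 1 B
  set Q : Matrix (Fin n1 ⊕ Fin n2) (Fin n1) ℂ := fromRows 1 A
  have hAΞ : A * Ξ1 x t = Ξ2 x t * A := by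
    rw [hΞ1, hΞ2]; exact mul_exp_quadratic_eq_exp_quadratic_mul hA _ _
  have hBΞ : mconj B * Ξ2 x t = Ξ1 x t * mconj B := by
    rw [hΞ1, hΞ2]
    exact mul_exp_quadratic_eq_exp_quadratic_mul (by simpa using (congrArg mconj hB).symm) _ _
  have hΞ1unit : IsUnit (Ξ1 x t) := hΞ1 x t ▸ isUnit_exp _
  have hΞunit : IsUnit (Ξ x t) := by
    rw [hΞ, isUnit_fromBlocks_zero₂₁]
    exact ⟨hΞ1unit, hΞ2 x t ▸ isUnit_exp _⟩
  have hQ : Ξ x t * Q = Q * Ξ1 x t := by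
    simp [Q, hΞ, fromBlocks_mul_fromRows, fromRows_mul, hAΞ]
  have hP : mconj P * Ξ x t = Ξ1 x t * mconj P := by
    simp [P, hΞ, fromCols_mul_fromBlocks, mul_fromCols, hBΞ]
  have hCPQ : C = mconj P * Q := by simp [hC, P, Q, fromCols_mul_fromRows]
  have hK : K = Q * K1 * P := by
    simp [hKblocks, P, Q, fromRows_mul, mul_fromCols, Matrix.mul_assoc]
  have hU' : U = U1 * P := by rw [hU, mul_fromCols, Matrix.mul_one]
  have hV' : V = Q * V1 := by rw [hV, fromRows_mul, Matrix.one_mul]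
  have key :=
    mul_inv_nlsDenominator_mul_eq ε K1 hΞunit hΞ1unit hQ hP (hCPQ ▸ hCinv) (hK ▸ hM)
  rw [← hK, ← hCPQ, ← hΞt1] at key
  calc U * ((mconj (Ξ x t))⁻¹ - ε • (mconj K * Ξ x t * K))⁻¹ * mconj V
      = U1 * (P * (nlsDenominator ε (Ξ x t) K)⁻¹ * mconj Q) * mconj V1 := by
        rw [hU', hV', mconj_mul_s13, nlsDenominator]; simp only [Matrix.mul_assoc]
    _ = _ := by rw [key, nlsDenominator]

/-- Superposition with similar data reduces to a redefinition of `U₁`: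
the NLS solution determined by the superposed data coincides with the one
determined by the data `(S₁, U₁ C, V₁)`. -/
theorem superposition_of_similar_data
    {n1 n2 m : ℕ}
    (ε : ℂ) (hε : ε = 1 ∨ ε = -1)
    (S1 : Matrix (Fin n1) (Fin n1) ℂ) (S2 : Matrix (Fin n2) (Fin n2) ℂ)
    (U1 : Matrix (Fin m) (Fin n1) ℂ) (V1 : Matrix (Fin n1) (Fin m) ℂ)
    (A : Matrix (Fin n2) (Fin n1) ℂ) (B : Matrix (Fin n1) (Fin n2) ℂ)
    (hA : A * S1 = S2 * A)
    (hB : mconj S1 * B = B * mconj S2)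
    (K1 : Matrix (Fin n1) (Fin n1) ℂ)
    (hK1 : S1 * K1 + K1 * mconj S1 = V1 * U1)
    (U : Matrix (Fin m) (Fin n1 ⊕ Fin n2) ℂ)
    (hU : U = fromCols U1 (U1 * B))
    (V : Matrix (Fin n1 ⊕ Fin n2) (Fin m) ℂ)
    (hV : V = fromRows V1 (A * V1))
    (K : Matrix (Fin n1 ⊕ Fin n2) (Fin n1 ⊕ Fin n2) ℂ)
    (hKblocks : K = fromBlocks K1 (K1 * B) (A * K1) (A * K1 * B))
    (Ξ1 : ℝ → ℝ → Matrix (Fin n1) (Fin n1) ℂ)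
    (Ξ2 : ℝ → ℝ → Matrix (Fin n2) (Fin n2) ℂ)
    (hΞ1 : ∀ x t : ℝ,
      Ξ1 x t = NormedSpace.exp ((-(x : ℂ)) • S1 - (Complex.I * t) • (S1 * S1)))
    (hΞ2 : ∀ x t : ℝ,
      Ξ2 x t = NormedSpace.exp ((-(x : ℂ)) • S2 - (Complex.I * t) • (S2 * S2)))
    (Ξ : ℝ → ℝ → Matrix (Fin n1 ⊕ Fin n2) (Fin n1 ⊕ Fin n2) ℂ)
    (hΞ : ∀ x t : ℝ, Ξ x t = fromBlocks (Ξ1 x t) 0 0 (Ξ2 x t))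
    (C : Matrix (Fin n1) (Fin n1) ℂ)
    (hC : C = 1 + mconj B * A)
    (hCinv : IsUnit C)
    (Ξt1 : ℝ → ℝ → Matrix (Fin n1) (Fin n1) ℂ)
    (hΞt1 : ∀ x t : ℝ, Ξt1 x t = Ξ1 x t * C) :
    ∀ x t : ℝ,
      IsUnit ((mconj (Ξ x t))⁻¹ - ε • (mconj K * Ξ x t * K)) →
      IsUnit ((mconj (Ξt1 x t))⁻¹ - ε • (mconj K1 * Ξt1 x t * K1)) →
      U * ((mconj (Ξ x t))⁻¹ - ε • (mconj K * Ξ x t * K))⁻¹ * mconj V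
        = U1 * ((mconj (Ξt1 x t))⁻¹ - ε • (mconj K1 * Ξt1 x t * K1))⁻¹ * mconj V1 :=
  superposition_of_similar_data_general ε S1 S2 U1 V1 A B hA hB K1 U hU V hV K hKblocks Ξ1 Ξ2 hΞ1
    hΞ2 Ξ hΞ C hC hCinv Ξt1 hΞt1
end

section
/- Let S be an n×n, Û an m×n, and V an n×m complex matrix, and suppose the n×n matrix K̂ satisfies the Sylvester equation S K̂ + K̂ S = V Û. For (x,t) ∈ ℝ² set Ξ̂(x,t) = exp(−2(x S + t S³)), and assume that I − K̂ Ξ̂(x,t) is invertible for all (x,t) ∈ ℝ². Then φ = Û Ξ̂ (I − K̂ Ξ̂)⁻¹ V is a smooth m×m matrix-valued function on ℝ² and u = φ_x satisfies the m×m matrix KdV equation u_t − (1/4) u_xxx − (3/2)(u²)_x = 0. -/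
open Matrix Filter NormedSpace Topology

section AlgebraLemmas
variable {R : Type*} [Ring R]

theorem kdv_red1 (a e k w : R)
    (h3 : e * k * w = w - 1) :
    w * (a * e * k) * w * e + w * (a * e) = w * a * (w * e) := by
  have z3 : e * k * w - (w - 1) = 0 := sub_eq_zero_of_eq h3
  have cert : w * (a * e * k) * w * e + w * (a * e) - w * a * (w * e)
      = (w * a * (e * k * w - (w - 1)) * e) := by noncomm_ring
  have h0 : w * (a * e * k) * w * e + w * (a * e) - w * a * (w * e) = 0 := by
    rw [cert, z3]; simp
  exact sub_eq_zero.mp h0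

theorem kdv_red2 (a e k w : R) (h3 : e * k * w = w - 1) :
    w * (a * e * k) * w * a * (w * e) + w * a * (w * (a * e * k) * w * e + w * (a * e)) = 2 * (w * a * (w * a * (w * e))) - w * (a * a) * (w * e) := by
  have z3 : e * k * w - (w - 1) = 0 := sub_eq_zero_of_eq h3
  have cert : (w * (a * e * k) * w * a * (w * e) + w * a * (w * (a * e * k) * w * e + w * (a * e))) - (2 * (w * a * (w * a * (w * e))) - w * (a * a) * (w * e))
      = (w * a * (e * k * w - (w - 1)) * a * w * e) + (w * a * w * a * (e * k * w - (w - 1)) * e) := by noncomm_ring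
  have h0 : (w * (a * e * k) * w * a * (w * e) + w * a * (w * (a * e * k) * w * e + w * (a * e))) - (2 * (w * a * (w * a * (w * e))) - w * (a * a) * (w * e)) = 0 := by
    rw [cert, z3]; simp
  exact sub_eq_zero.mp h0

theorem kdv_red3 (a e k w : R) (h3 : e * k * w = w - 1) :
    2 * (w * (a * e * k) * w * a * (w * a * (w * e)) + w * a * (w * (a * e * k) * w * a * (w * e) + w * a * (w * (a * e * k) * w * e + w * (a * e)))) - (w * (a * e * k) * w * (a * a) * (w * e) + w * (a * a) * (w * (a * e * k) * w * e + w * (a * e))) = 6 * (w * a * (w * a * (w * a * (w * e)))) - 3 * (w * (a * a) * (w * a * (w * e))) - 3 * (w * a * (w * (a * a) * (w * e))) + w * (a * a * a) * (w * e) := by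
  have z3 : e * k * w - (w - 1) = 0 := sub_eq_zero_of_eq h3
  have cert : (2 * (w * (a * e * k) * w * a * (w * a * (w * e)) + w * a * (w * (a * e * k) * w * a * (w * e) + w * a * (w * (a * e * k) * w * e + w * (a * e)))) - (w * (a * e * k) * w * (a * a) * (w * e) + w * (a * a) * (w * (a * e * k) * w * e + w * (a * e)))) - (6 * (w * a * (w * a * (w * a * (w * e)))) - 3 * (w * (a * a) * (w * a * (w * e))) - 3 * (w * a * (w * (a * a) * (w * e))) + w * (a * a * a) * (w * e))
      = (-(w * a * (e * k * w - (w - 1)) * a * a * w * e)) + ((2) * (w * a * (e * k * w - (w - 1)) * a * w * a * w * e)) + (-(w * a * a * w * a * (e * k * w - (w - 1)) * e)) + ((2) * (w * a * w * a * (e * k * w - (w - 1)) * a * w * e)) + ((2) * (w * a * w * a * w * a * (e * k * w - (w - 1)) * e)) := by noncomm_ring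
  have h0 : (2 * (w * (a * e * k) * w * a * (w * a * (w * e)) + w * a * (w * (a * e * k) * w * a * (w * e) + w * a * (w * (a * e * k) * w * e + w * (a * e)))) - (w * (a * e * k) * w * (a * a) * (w * e) + w * (a * a) * (w * (a * e * k) * w * e + w * (a * e)))) - (6 * (w * a * (w * a * (w * a * (w * e)))) - 3 * (w * (a * a) * (w * a * (w * e))) - 3 * (w * a * (w * (a * a) * (w * e))) + w * (a * a * a) * (w * e)) = 0 := by
    rw [cert, z3]; simp
  exact sub_eq_zero.mp h0

theorem kdv_red4 (a e k w : R) (h3 : e * k * w = w - 1) :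
    6 * (w * (a * e * k) * w * a * (w * a * (w * a * (w * e))) + w * a * (w * (a * e * k) * w * a * (w * a * (w * e)) + w * a * (w * (a * e * k) * w * a * (w * e) + w * a * (w * (a * e * k) * w * e + w * (a * e))))) - 3 * (w * (a * e * k) * w * (a * a) * (w * a * (w * e)) + w * (a * a) * (w * (a * e * k) * w * a * (w * e) + w * a * (w * (a * e * k) * w * e + w * (a * e)))) - 3 * (w * (a * e * k) * w * a * (w * (a * a) * (w * e)) + w * a * (w * (a * e * k) * w * (a * a) * (w * e) + w * (a * a) * (w * (a * e * k) * w * e + w * (a * e)))) + (w * (a * e * k) * w * (a * a * a) * (w * e) + w * (a * a * a) * (w * (a * e * k) * w * e + w * (a * e))) = 24 * (w * a * (w * a * (w * a * (w * a * (w * e))))) - 12 * (w * (a * a) * (w * a * (w * a * (w * e)))) - 12 * (w * a * (w * (a * a) * (w * a * (w * e)))) - 12 * (w * a * (w * a * (w * (a * a) * (w * e)))) + 6 * (w * (a * a) * (w * (a * a) * (w * e))) + 4 * (w * (a * a * a) * (w * a * (w * e))) + 4 * (w * a * (w * (a * a * a) * (w * e))) - w * (a * a * a * a) * (w * e) :=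 by
  have z3 : e * k * w - (w - 1) = 0 := sub_eq_zero_of_eq h3
  have cert : (6 * (w * (a * e * k) * w * a * (w * a * (w * a * (w * e))) + w * a * (w * (a * e * k) * w * a * (w * a * (w * e)) + w * a * (w * (a * e * k) * w * a * (w * e) + w * a * (w * (a * e * k) * w * e + w * (a * e))))) - 3 * (w * (a * e * k) * w * (a * a) * (w * a * (w * e)) + w * (a * a) * (w * (a * e * k) * w * a * (w * e) + w * a * (w * (a * e * k) * w * e + w * (a * e)))) - 3 * (w * (a * e * k) * w * a * (w * (a * a) * (w * e)) + w * a * (w * (a * e * k) * w * (a * a) * (w * e) + w * (a * a) * (w * (a * e * k) * w * e + w * (a * e)))) + (w * (a * e * k) * w * (a * a * a) * (w * e) + w * (a * a * a) * (w * (a * e * k) * w * e + w * (a * e)))) - (24 * (w * a * (w * a * (w * a * (w * a * (w * e))))) - 12 * (w * (a * a) * (w * a * (w * a * (w * e)))) - 12 * (w * a * (w * (a * a) * (w * a * (w * e)))) - 12 * (w * a * (w * a * (w * (a * a) * (w * e)))) + 6 * (w * (a * a) * (w * (a * a) * (w * e))) + 4 * (w * (a * a * a) * (w * a * (w * e)))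 + 4 * (w * a * (w * (a * a * a) * (w * e))) - w * (a * a * a * a) * (w * e))
      = (w * a * (e * k * w - (w - 1)) * a * a * a * w * e) + ((-3) * (w * a * (e * k * w - (w - 1)) * a * a * w * a * w * e)) + ((-3) * (w * a * (e * k * w - (w - 1)) * a * w * a * a * w * e)) + ((6) * (w * a * (e * k * w - (w - 1)) * a * w * a * w * a * w * e)) + (w * a * a * a * w * a * (e * k * w - (w - 1)) * e) + ((-3) * (w * a * a * w * a * (e * k * w - (w - 1)) * a * w * e)) + ((-3) * (w * a * a * w * a * w * a * (e * k * w - (w - 1)) * e)) + ((-3) * (w * a * w * a * (e * k * w - (w - 1)) * a * a * w * e)) + ((6) * (w * a * w * a * (e * k * w - (w - 1)) * a * w * a * w * e)) + ((-3) * (w * a * w * a * a * w * a * (e * k * w - (w - 1)) * e)) + ((6) * (w * a * w * a * w * a * (e * k * w - (w - 1)) * a * w * e)) + ((6) * (w * a * w * a * w * a * w * a * (e * k * w - (w - 1)) * e)) := by noncomm_ring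
  have h0 : (6 * (w * (a * e * k) * w * a * (w * a * (w * a * (w * e))) + w * a * (w * (a * e * k) * w * a * (w * a * (w * e)) + w * a * (w * (a * e * k) * w * a * (w * e) + w * a * (w * (a * e * k) * w * e + w * (a * e))))) - 3 * (w * (a * e * k) * w * (a * a) * (w * a * (w * e)) + w * (a * a) * (w * (a * e * k) * w * a * (w * e) + w * a * (w * (a * e * k) * w * e + w * (a * e)))) - 3 * (w * (a * e * k) * w * a * (w * (a * a) * (w * e)) + w * a * (w * (a * e * k) * w * (a * a) * (w * e) + w * (a * a) * (w * (a * e * k) * w * e + w * (a * e)))) + (w * (a * e * k) * w * (a * a * a) * (w * e) + w * (a * a * a) * (w * (a * e * k) * w * e + w * (a * e)))) - (24 * (w * a * (w * a * (w * a * (w * a * (w * e))))) - 12 * (w * (a * a) * (w * a * (w * a * (w * e)))) - 12 * (w * a * (w * (a * a) * (w * a * (w * e)))) - 12 * (w * a * (w * a * (w * (a * a) * (w * e)))) + 6 * (w * (a * a) * (w * (a * a) * (w * e))) + 4 * (w * (a * a * a) * (w * a * (w * e))) + 4 * (w * a * (w * (a * a * a) * (w * e))) - w * (a * a * a * a) *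 (w * e)) = 0 := by
    rw [cert, z3]; simp
  exact sub_eq_zero.mp h0

theorem kdv_final (a b e k w z : R) (hae : a * e = e * a) (h3 : e * k * w = w - 1) (h4 : w * e * k = w - 1) (hz : a * k + k * a + 2 * z = 0) (hb : a * a * a - 4 * b = 0) :
    4 * (w * (b * e * k) * w * a * (w * e) + w * a * (w * (b * e * k) * w * e + w * (b * e))) - (24 * (w * a * (w * a * (w * a * (w * a * (w * e))))) - 12 * (w * (a * a) * (w * a * (w * a * (w * e)))) - 12 * (w * a * (w * (a * a) * (w * a * (w * e)))) - 12 * (w * a * (w * a * (w * (a * a) * (w * e)))) + 6 * (w * (a * a) * (w * (a * a) * (w * e))) + 4 * (w * (a * a * a) * (w * a * (w * e))) + 4 * (w * a * (w * (a * a * a) * (w * e))) - w * (a * a * a * a) * (w * e)) - 6 * ((2 * (w * a * (w * a * (w * e))) - w * (a * a) * (w * e)) * z * (w * a * (w * e)) + (w * a * (w * e)) * z * (2 * (w * a * (w * a * (w * e))) - w * (a * a) * (w * e))) = 0 := by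
  have z3 : e * k * w - (w - 1) = 0 := sub_eq_zero_of_eq h3
  have z4 : w * e * k - (w - 1) = 0 := sub_eq_zero_of_eq h4
  have zc : a * e - e * a = 0 := sub_eq_zero_of_eq hae
  have cert : (4 * (w * (b * e * k) * w * a * (w * e) + w * a * (w * (b * e * k) * w * e + w * (b * e))) - (24 * (w * a * (w * a * (w * a * (w * a * (w * e))))) - 12 * (w * (a * a) * (w * a * (w * a * (w * e)))) - 12 * (w * a * (w * (a * a) * (w * a * (w * e)))) - 12 * (w * a * (w * a * (w * (a * a) * (w * e)))) + 6 * (w * (a * a) * (w * (a * a) * (w * e))) + 4 * (w * (a * a * a) * (w * a * (w * e))) + 4 * (w * a * (w * (a * a * a) * (w * e))) - w * (a * a * a * a) * (w * e)) - 6 * ((2 * (w * a * (w * a * (w * e))) - w * (a * a) * (w * e)) * z * (w * a * (w * e)) + (w * a * (w * e)) * z * (2 * (w * a * (w * a * (w * e))) - w * (a * a) * (w * e)))) - (0)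
      = (-(w * (a * a * a - 4 * b) * e * k * w * a * w * e)) + ((-3) * (w * a * (w * e * k - (w - 1)) * a * w * a * a * w * e)) + ((6) * (w * a * (w * e * k - (w - 1)) * a * w * a * w * a * w * e)) + ((-3) * (w * a * a * (w * e * k - (w - 1)) * a * w * a * w * e)) + (w * a * a * a * (e * k * w - (w - 1)) * a * w * e) + ((3) * (w * a * a * w * (a * e - e * a) * k * w * a * w * e)) + ((-3) * (w * a * a * w * a * (e * k * w - (w - 1)) * a * w * e)) + ((3) * (w * a * a * w * e * (a * k + k * a + 2 * z) * w * a * w * e)) + ((3) * (w * a * w * (a * e - e * a) * k * w * a * a * w * e)) + ((-6) * (w * a * w * (a * e - e * a) * k * w * a * w * a * w * e)) + (-(w * a * w * (a * a * a - 4 * b) * e)) + (-(w * a * w * (a * a * a - 4 * b) * e * k * w * e)) + ((-3) * (w * a * w * a * (e * k * w - (w - 1)) * a * a * w * e)) + ((6) * (w * a * w * a * (e * k * w - (w - 1)) * a * w * a * w * e)) + ((6) * (w * a * w * a * (w * e * k - (w - 1)) * a * w * a * w * e)) + (w * a * w * a * a * a * (e * k * w - (w - 1)) * e) + ((-6) *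 (w * a * w * a * w * (a * e - e * a) * k * w * a * w * e)) + ((6) * (w * a * w * a * w * a * (e * k * w - (w - 1)) * a * w * e)) + ((-6) * (w * a * w * a * w * e * (a * k + k * a + 2 * z) * w * a * w * e)) + ((3) * (w * a * w * e * (a * k + k * a + 2 * z) * w * a * a * w * e)) + ((-6) * (w * a * w * e * (a * k + k * a + 2 * z) * w * a * w * a * w * e)) := by noncomm_ring
  have h0 : (4 * (w * (b * e * k) * w * a * (w * e) + w * a * (w * (b * e * k) * w * e + w * (b * e))) - (24 * (w * a * (w * a * (w * a * (w * a * (w * e))))) - 12 * (w * (a * a) * (w * a * (w * a * (w * e)))) - 12 * (w * a * (w * (a * a) * (w * a * (w * e)))) - 12 * (w * a * (w * a * (w * (a * a) * (w * e)))) + 6 * (w * (a * a) * (w * (a * a) * (w * e))) + 4 * (w * (a * a * a) * (w * a * (w * e))) + 4 * (w * a * (w * (a * a * a) * (w * e))) - w * (a * a * a * a) * (w * e)) - 6 * ((2 * (w * a * (w * a * (w * e))) - w * (a * a) * (w * e)) * z * (w * a * (w * e)) + (w * a * (w * e)) * z * (2 * (w * a * (w * a * (w * e))) - w * (a * a) *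 (w * e)))) - (0) = 0 := by
    rw [cert, z3, z4, zc, hz, hb]; simp
  exact sub_eq_zero.mp h0
end AlgebraLemmas


section KdVAnalysis
attribute [local instance] Matrix.linftyOpNormedRing Matrix.linftyOpNormedAlgebra

variable {n m : ℕ} (S : Matrix (Fin n) (Fin n) ℂ) (U : Matrix (Fin m) (Fin n) ℂ)
  (V : Matrix (Fin n) (Fin m) ℂ) (K : Matrix (Fin n) (Fin n) ℂ)

noncomputable def mA : Matrix (Fin n) (Fin n) ℂ := (-2:ℂ) • S
noncomputable def mB : Matrix (Fin n) (Fin n) ℂ := (-2:ℂ) • (S*S*S)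
noncomputable def mE (x t : ℝ) : Matrix (Fin n) (Fin n) ℂ :=
  exp ((x:ℂ) • mA S) * exp ((t:ℂ) • mB S)
noncomputable def mW (x t : ℝ) : Matrix (Fin n) (Fin n) ℂ :=
  Ring.inverse (1 - mE S x t * K)

theorem commAB : Commute (mA S) (mB S) := by
  unfold mA mB
  exact ((((Commute.refl S).mul_right (Commute.refl S)).mul_right
    (Commute.refl S)).smul_left _).smul_right _

theorem commAE (x t : ℝ) : Commute (mA S) (mE S x t) := by
  unfold mE
  exact Commute.mul_right (((Commute.refl (mA S)).smul_right _).exp_right)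
    (((commAB S).smul_right _).exp_right)

theorem mE_eq (x t : ℝ) :
    exp ((-2 : ℂ) • ((x : ℂ) • S + (t : ℂ) • (S * S * S))) = mE S x t := by
  have h1 : (-2 : ℂ) • ((x : ℂ) • S + (t : ℂ) • (S * S * S))
      = (x:ℂ) • mA S + (t:ℂ) • mB S := by
    unfold mA mB
    rw [smul_add, smul_comm ((-2:ℂ)) ((x:ℂ)), smul_comm ((-2:ℂ)) ((t:ℂ))]
  rw [h1, Matrix.exp_add_of_commute _ _ (((commAB S).smul_right ((t:ℂ))).smul_left ((x:ℂ)))]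
  rfl

theorem key_exp (M : Matrix (Fin n) (Fin n) ℂ) (x : ℝ) :
    HasDerivAt (fun y : ℝ => exp ((y:ℂ) • M)) (M * exp ((x:ℂ) • M)) x := by
  simp only [Complex.coe_smul]
  exact hasDerivAt_exp_smul_const' M x

theorem hasDerivAt_mE_x (x t : ℝ) :
    HasDerivAt (fun y : ℝ => mE S y t) (mA S * mE S x t) x := by
  unfold mE
  have h := (key_exp (mA S) x).mul_const (exp ((t:ℂ) • mB S))
  rw [mul_assoc] at h
  exact h

theorem hasDerivAt_mE_t (x t : ℝ) :
    HasDerivAt (fun s : ℝ => mE S x s) (mB S * mE S x t) t := by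
  have h := (key_exp (mB S) t).const_mul (exp ((x:ℂ) • mA S))
  have hc : exp ((x:ℂ) • mA S) * (mB S * exp ((t:ℂ) • mB S))
      = mB S * mE S x t := by
    have hcom : Commute (mB S) (exp ((x:ℂ) • mA S)) :=
      ((commAB S).symm.smul_right _).exp_right
    rw [← mul_assoc, ← hcom.eq, mul_assoc]; rfl
  rw [hc] at h
  exact h

theorem unit_swap {R : Type*} [Ring R] {p q : R} (h : IsUnit (1 - p * q)) :
    IsUnit (1 - q * p) := by
  have hu : (h.unit : R) = 1 - p * q := h.unit_spec
  set M := ((h.unit⁻¹ : Rˣ) : R) with hM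
  have hm1 : (1 - p * q) * M = 1 := by rw [← hu]; exact h.unit.mul_inv
  have hm2 : M * (1 - p * q) = 1 := by rw [← hu]; exact h.unit.inv_mul
  refine ⟨⟨1 - q * p, 1 + q * M * p, ?_, ?_⟩, rfl⟩
  · have e1 : (1 - q * p) * (1 + q * M * p)
        = 1 - q * p + q * ((1 - p * q) * M) * p := by noncomm_ring
    rw [e1, hm1]; noncomm_ring
  · have e1 : (1 + q * M * p) * (1 - q * p)
        = 1 - q * p + q * (M * (1 - p * q)) * p := by noncomm_ring
    rw [e1, hm2]; noncomm_ring

theorem isUnit_EK (hinv : ∀ x t : ℝ, IsUnit (1 - K * mE S x t)) (x t : ℝ) : IsUnit (1 - mE S x t * K) := unit_swap (hinv x t)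

theorem h3fact (hinv : ∀ x t : ℝ, IsUnit (1 - K * mE S x t)) (x t : ℝ) : mE S x t * K * mW S K x t = mW S K x t - 1 := by
  have h' : (1 - mE S x t * K) * mW S K x t = 1 :=
    Ring.mul_inverse_cancel _ (isUnit_EK S K hinv x t)
  calc mE S x t * K * mW S K x t
      = mW S K x t - (1 - mE S x t * K) * mW S K x t := by noncomm_ring
    _ = mW S K x t - 1 := by rw [h']

theorem h4fact (hinv : ∀ x t : ℝ, IsUnit (1 - K * mE S x t)) (x t : ℝ) : mW S K x t * mE S x t * K = mW S K x t - 1 := by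
  have h' : mW S K x t * (1 - mE S x t * K) = 1 :=
    Ring.inverse_mul_cancel _ (isUnit_EK S K hinv x t)
  calc mW S K x t * mE S x t * K
      = mW S K x t - mW S K x t * (1 - mE S x t * K) := by noncomm_ring
    _ = mW S K x t - 1 := by rw [h']

theorem em_eq_we (hinv : ∀ x t : ℝ, IsUnit (1 - K * mE S x t)) (x t : ℝ) :
    mE S x t * Ring.inverse (1 - K * mE S x t) = mW S K x t * mE S x t := by
  have h2 := isUnit_EK S K hinv x t
  have h1 : mW S K x t * (1 - mE S x t * K) = 1 := Ring.inverse_mul_cancel _ h2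
  calc mE S x t * Ring.inverse (1 - K * mE S x t)
      = mW S K x t * (1 - mE S x t * K) * (mE S x t * Ring.inverse (1 - K * mE S x t)) := by
        rw [h1, one_mul]
    _ = mW S K x t * (mE S x t * ((1 - K * mE S x t) * Ring.inverse (1 - K * mE S x t))) := by
        noncomm_ring
    _ = mW S K x t * mE S x t := by rw [Ring.mul_inverse_cancel _ (hinv x t), mul_one]

theorem hasDerivAt_mW_x (hinv : ∀ x t : ℝ, IsUnit (1 - K * mE S x t)) (x t : ℝ) :
    HasDerivAt (fun y : ℝ => mW S K y t)
      (mW S K x t * (mA S * mE S x t * K) * mW S K x t) x := by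
  have hu := isUnit_EK S K hinv x t
  have hg : HasDerivAt (fun y : ℝ => 1 - mE S y t * K) (-(mA S * mE S x t * K)) x :=
    ((hasDerivAt_mE_x S x t).mul_const K).const_sub 1
  have hf := hasFDerivAt_ringInverse (𝕜 := ℝ) hu.unit
  rw [hu.unit_spec] at hf
  have h := hf.comp_hasDerivAt x hg
  have hval : ((hu.unit⁻¹ : _ˣ) : Matrix (Fin n) (Fin n) ℂ)
      = Ring.inverse (1 - mE S x t * K) :=
    (Ring.inverse_unit hu.unit).symm.trans (congrArg Ring.inverse hu.unit_spec)
  unfold mW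
  simp only [ContinuousLinearMap.neg_apply, ContinuousLinearMap.mulLeftRight_apply,
    mul_neg, neg_mul, neg_neg, hval] at h
  exact h

theorem hasDerivAt_mW_t (hinv : ∀ x t : ℝ, IsUnit (1 - K * mE S x t)) (x t : ℝ) :
    HasDerivAt (fun s : ℝ => mW S K x s)
      (mW S K x t * (mB S * mE S x t * K) * mW S K x t) t := by
  have hu := isUnit_EK S K hinv x t
  have hg : HasDerivAt (fun s : ℝ => 1 - mE S x s * K) (-(mB S * mE S x t * K)) t :=
    ((hasDerivAt_mE_t S x t).mul_const K).const_sub 1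
  have hf := hasFDerivAt_ringInverse (𝕜 := ℝ) hu.unit
  rw [hu.unit_spec] at hf
  have h := hf.comp_hasDerivAt t hg
  have hval : ((hu.unit⁻¹ : _ˣ) : Matrix (Fin n) (Fin n) ℂ)
      = Ring.inverse (1 - mE S x t * K) :=
    (Ring.inverse_unit hu.unit).symm.trans (congrArg Ring.inverse hu.unit_spec)
  unfold mW
  simp only [ContinuousLinearMap.neg_apply, ContinuousLinearMap.mulLeftRight_apply,
    mul_neg, neg_mul, neg_neg, hval] at h
  exact h


theorem hasDerivAt_c0 (hinv : ∀ x t : ℝ, IsUnit (1 - K * mE S x t)) (x t : ℝ) :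
    HasDerivAt (fun y : ℝ => mW S K y t * mE S y t) (mW S K x t * mA S * (mW S K x t * mE S x t)) x := by
  have h := (hasDerivAt_mW_x S K hinv x t).mul (hasDerivAt_mE_x S x t)
  exact (kdv_red1 (mA S) (mE S x t) K (mW S K x t) (h3fact S K hinv x t)) ▸ h

theorem hasDerivAt_c1 (hinv : ∀ x t : ℝ, IsUnit (1 - K * mE S x t)) (x t : ℝ) :
    HasDerivAt (fun y : ℝ => mW S K y t * mA S * (mW S K y t * mE S y t)) (2 * (mW S K x t * mA S * (mW S K x t * mA S * (mW S K x t * mE S x t))) - mW S K x t * (mA S * mA S) * (mW S K x t * mE S x t)) x := by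
  have h := ((hasDerivAt_mW_x S K hinv x t).mul_const (mA S)).mul
    ((hasDerivAt_mW_x S K hinv x t).mul (hasDerivAt_mE_x S x t))
  exact (kdv_red2 (mA S) (mE S x t) K (mW S K x t) (h3fact S K hinv x t)) ▸ h

theorem hasDerivAt_c2 (hinv : ∀ x t : ℝ, IsUnit (1 - K * mE S x t)) (x t : ℝ) :
    HasDerivAt (fun y : ℝ => 2 * (mW S K y t * mA S * (mW S K y t * mA S * (mW S K y t * mE S y t))) - mW S K y t * (mA S * mA S) * (mW S K y t * mE S y t)) (6 * (mW S K x t * mA S * (mW S K x t * mA S * (mW S K x t * mA S * (mW S K x t * mE S x t)))) - 3 * (mW S K x t * (mA S * mA S) * (mW S K x t * mA S * (mW S K x t * mE S x t))) - 3 * (mW S K x t * mA S * (mW S K x t * (mA S * mA S) * (mW S K x t * mE S x t))) + mW S K x t * (mA S * mA S * mA S) * (mW S K x t * mE S x t)) x := by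
  have hW := hasDerivAt_mW_x S K hinv x t
  have hE := hasDerivAt_mE_x S x t
  have h := (((hW.mul_const (mA S)).mul ((hW.mul_const (mA S)).mul (hW.mul hE))).const_mul 2).sub
    ((hW.mul_const (mA S * mA S)).mul (hW.mul hE))
  exact (kdv_red3 (mA S) (mE S x t) K (mW S K x t) (h3fact S K hinv x t)) ▸ h

theorem hasDerivAt_c3 (hinv : ∀ x t : ℝ, IsUnit (1 - K * mE S x t)) (x t : ℝ) :
    HasDerivAt (fun y : ℝ => 6 * (mW S K y t * mA S * (mW S K y t * mA S * (mW S K y t * mA S * (mW S K y t * mE S y t)))) - 3 * (mW S K y t * (mA S * mA S) * (mW S K y t * mA S * (mW S K y t * mE S y t))) - 3 * (mW S K y t * mA S * (mW S K y t * (mA S * mA S) * (mW S K y t * mE S y t))) + mW S K y t * (mA S * mA S * mA S) * (mW S K y t * mE S y t)) (24 * (mW S K x t * mA S * (mW S K x t * mA S * (mW S K x t * mA S * (mW S K x t * mA S * (mW S K x t * mE S x t))))) - 12 * (mW S K x t * (mA S * mA S) * (mW S K x t * mA S * (mW S K x t * mA S * (mW S K x t * mE S x t)))) - 12 * (mW S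 K x t * mA S * (mW S K x t * (mA S * mA S) * (mW S K x t * mA S * (mW S K x t * mE S x t)))) - 12 * (mW S K x t * mA S * (mW S K x t * mA S * (mW S K x t * (mA S * mA S) * (mW S K x t * mE S x t)))) + 6 * (mW S K x t * (mA S * mA S) * (mW S K x t * (mA S * mA S) * (mW S K x t * mE S x t))) + 4 * (mW S K x t * (mA S * mA S * mA S) * (mW S K x t * mA S * (mW S K x t * mE S x t))) + 4 * (mW S K x t * mA S * (mW S K x t * (mA S * mA S * mA S) * (mW S K x t * mE S x t))) - mW S K x t * (mA S * mA S * mA S * mA S) * (mW S K x t * mE S x t)) x := by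
  have hW := hasDerivAt_mW_x S K hinv x t
  have hE := hasDerivAt_mE_x S x t
  have p1 := ((hW.mul_const (mA S)).mul ((hW.mul_const (mA S)).mul
    ((hW.mul_const (mA S)).mul (hW.mul hE)))).const_mul 6
  have p2 := ((hW.mul_const (mA S * mA S)).mul ((hW.mul_const (mA S)).mul (hW.mul hE))).const_mul 3
  have p3 := ((hW.mul_const (mA S)).mul ((hW.mul_const (mA S * mA S)).mul (hW.mul hE))).const_mul 3
  have p4 := (hW.mul_const (mA S * mA S * mA S)).mul (hW.mul hE)
  have h := ((p1.sub p2).sub p3).add p4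
  exact (kdv_red4 (mA S) (mE S x t) K (mW S K x t) (h3fact S K hinv x t)) ▸ h

theorem hasDerivAt_c1_t (hinv : ∀ x t : ℝ, IsUnit (1 - K * mE S x t)) (x t : ℝ) :
    HasDerivAt (fun s : ℝ => mW S K x s * mA S * (mW S K x s * mE S x s)) (mW S K x t * (mB S * mE S x t * K) * mW S K x t * mA S * (mW S K x t * mE S x t) + mW S K x t * mA S * (mW S K x t * (mB S * mE S x t * K) * mW S K x t * mE S x t + mW S K x t * (mB S * mE S x t))) t :=
  ((hasDerivAt_mW_t S K hinv x t).mul_const (mA S)).mul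
    ((hasDerivAt_mW_t S K hinv x t).mul (hasDerivAt_mE_t S x t))
noncomputable def sandL : Matrix (Fin n) (Fin n) ℂ →ₗ[ℂ] Matrix (Fin m) (Fin m) ℂ where
  toFun M := U * M * V
  map_add' M N := by simp only [Matrix.mul_add, Matrix.add_mul]
  map_smul' c M := by
    simp only [RingHom.id_apply, Matrix.mul_smul, Matrix.smul_mul]

theorem sand_hasDerivAt {f : ℝ → Matrix (Fin n) (Fin n) ℂ} {D : Matrix (Fin n) (Fin n) ℂ}
    {x : ℝ} (h : HasDerivAt f D x) :
    HasDerivAt (fun y : ℝ => U * f y * V) (U * D * V) x := by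
  have h2 := (((sandL U V).toContinuousLinearMap.restrictScalars ℝ).hasFDerivAt
    (x := f x)).comp_hasDerivAt x h
  exact h2

theorem slope_phi (hinv : ∀ x t : ℝ, IsUnit (1 - K * mE S x t)) (x t : ℝ) :
    Tendsto (slope (fun y : ℝ => U * (mW S K y t * mE S y t) * V) x) (𝓝[≠] x)
      (𝓝 (U * (mW S K x t * mA S * (mW S K x t * mE S x t)) * V)) :=
  hasDerivAt_iff_tendsto_slope.mp (sand_hasDerivAt U V (hasDerivAt_c0 S K hinv x t))

theorem slope_c1 (hinv : ∀ x t : ℝ, IsUnit (1 - K * mE S x t)) (x t : ℝ) :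
    Tendsto (slope (fun y : ℝ => U * (mW S K y t * mA S * (mW S K y t * mE S y t)) * V) x) (𝓝[≠] x)
      (𝓝 (U * (2 * (mW S K x t * mA S * (mW S K x t * mA S * (mW S K x t * mE S x t))) - mW S K x t * (mA S * mA S) * (mW S K x t * mE S x t)) * V)) :=
  hasDerivAt_iff_tendsto_slope.mp (sand_hasDerivAt U V (hasDerivAt_c1 S K hinv x t))

theorem slope_c2 (hinv : ∀ x t : ℝ, IsUnit (1 - K * mE S x t)) (x t : ℝ) :
    Tendsto (slope (fun y : ℝ => U * (2 * (mW S K y t * mA S * (mW S K y t * mA S * (mW S K y t * mE S y t))) - mW S K y t * (mA S * mA S) * (mW S K y t * mE S y t)) * V) x) (𝓝[≠] x)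
      (𝓝 (U * (6 * (mW S K x t * mA S * (mW S K x t * mA S * (mW S K x t * mA S * (mW S K x t * mE S x t)))) - 3 * (mW S K x t * (mA S * mA S) * (mW S K x t * mA S * (mW S K x t * mE S x t))) - 3 * (mW S K x t * mA S * (mW S K x t * (mA S * mA S) * (mW S K x t * mE S x t))) + mW S K x t * (mA S * mA S * mA S) * (mW S K x t * mE S x t)) * V)) :=
  hasDerivAt_iff_tendsto_slope.mp (sand_hasDerivAt U V (hasDerivAt_c2 S K hinv x t))

theorem slope_c3 (hinv : ∀ x t : ℝ, IsUnit (1 - K * mE S x t)) (x t : ℝ) :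
    Tendsto (slope (fun y : ℝ => U * (6 * (mW S K y t * mA S * (mW S K y t * mA S * (mW S K y t * mA S * (mW S K y t * mE S y t)))) - 3 * (mW S K y t * (mA S * mA S) * (mW S K y t * mA S * (mW S K y t * mE S y t))) - 3 * (mW S K y t * mA S * (mW S K y t * (mA S * mA S) * (mW S K y t * mE S y t))) + mW S K y t * (mA S * mA S * mA S) * (mW S K y t * mE S y t)) * V) x) (𝓝[≠] x)
      (𝓝 (U * (24 * (mW S K x t * mA S * (mW S K x t * mA S * (mW S K x t * mA S * (mW S K x t * mA S * (mW S K x t * mE S x t))))) - 12 * (mW S K x t * (mA S * mA S) * (mW S K x t * mA S * (mW S K x t * mA S * (mW S K x t * mE S x t)))) - 12 * (mW S K x t * mA S * (mW S K x t * (mA S * mA S) * (mW S K x t * mA S * (mW S K x t * mE S x t)))) - 12 * (mW S K x t * mA S * (mW S K x t * mA S * (mW S K x t * (mA S * mA S) * (mW S K x t * mE S x t)))) + 6 * (mW S K x t * (mA S * mA S) * (mW S K x t * (mA S * mA S) * (mW S K x t * mE S x t))) + 4 * (mW S K x t * (mA S * mA S * mA S) * (mW S K x t * mA S * (mW S K x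 t * mE S x t))) + 4 * (mW S K x t * mA S * (mW S K x t * (mA S * mA S * mA S) * (mW S K x t * mE S x t))) - mW S K x t * (mA S * mA S * mA S * mA S) * (mW S K x t * mE S x t)) * V)) :=
  hasDerivAt_iff_tendsto_slope.mp (sand_hasDerivAt U V (hasDerivAt_c3 S K hinv x t))

theorem slope_c1_t (hinv : ∀ x t : ℝ, IsUnit (1 - K * mE S x t)) (x t : ℝ) :
    Tendsto (slope (fun s : ℝ => U * (mW S K x s * mA S * (mW S K x s * mE S x s)) * V) t) (𝓝[≠] t)
      (𝓝 (U * (mW S K x t * (mB S * mE S x t * K) * mW S K x t * mA S * (mW S K x t * mE S x t) + mW S K x t * mA S * (mW S K x t * (mB S * mE S x t * K) * mW S K x t * mE S x t + mW S K x t * (mB S * mE S x t))) * V)) :=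
  hasDerivAt_iff_tendsto_slope.mp (sand_hasDerivAt U V (hasDerivAt_c1_t S K hinv x t))

theorem slope_sq (hinv : ∀ x t : ℝ, IsUnit (1 - K * mE S x t)) (x t : ℝ) :
    Tendsto (slope (fun y : ℝ => (U * (mW S K y t * mA S * (mW S K y t * mE S y t)) * V) * (U * (mW S K y t * mA S * (mW S K y t * mE S y t)) * V)) x) (𝓝[≠] x)
      (𝓝 ((U * (2 * (mW S K x t * mA S * (mW S K x t * mA S * (mW S K x t * mE S x t))) - mW S K x t * (mA S * mA S) * (mW S K x t * mE S x t)) * V) * (U * (mW S K x t * mA S * (mW S K x t * mE S x t)) * V)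
        + (U * (mW S K x t * mA S * (mW S K x t * mE S x t)) * V) * (U * (2 * (mW S K x t * mA S * (mW S K x t * mA S * (mW S K x t * mE S x t))) - mW S K x t * (mA S * mA S) * (mW S K x t * mE S x t)) * V))) :=
  hasDerivAt_iff_tendsto_slope.mp ((sand_hasDerivAt U V (hasDerivAt_c1 S K hinv x t)).mul
    (sand_hasDerivAt U V (hasDerivAt_c1 S K hinv x t)))

theorem contDiff_entries (hinv : ∀ x t : ℝ, IsUnit (1 - K * mE S x t)) (i j : Fin m) :
    ContDiff ℝ (⊤ : ℕ∞) (fun z : ℝ × ℝ =>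
      (U * mE S z.1 z.2 * Ring.inverse (1 - K * mE S z.1 z.2) * V) i j) := by
  have cdexp : ∀ M : Matrix (Fin n) (Fin n) ℂ,
      ContDiff ℝ (⊤ : ℕ∞) (fun c : ℂ => exp (c • M)) := by
    intro M
    have hc : ContDiff ℂ (⊤ : ℕ∞) (fun c : ℂ => exp (c • M)) :=
      contDiff_iff_contDiffAt.mpr fun c =>
        ((exp_analytic (c • M)).contDiffAt).comp c
          ((contDiff_id.smul contDiff_const).contDiffAt)
    exact hc.restrict_scalars ℝ
  have cdE : ContDiff ℝ (⊤ : ℕ∞) (fun z : ℝ × ℝ => mE S z.1 z.2) := by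
    unfold mE
    exact ((cdexp (mA S)).comp (Complex.ofRealCLM.contDiff.comp contDiff_fst)).mul
      ((cdexp (mB S)).comp (Complex.ofRealCLM.contDiff.comp contDiff_snd))
  have cdInv : ContDiff ℝ (⊤ : ℕ∞) (fun z : ℝ × ℝ => Ring.inverse (1 - K * mE S z.1 z.2)) := by
    refine contDiff_iff_contDiffAt.mpr fun z => ?_
    have hct := contDiffAt_ringInverse ℝ (n := (⊤ : ℕ∞)) (hinv z.1 z.2).unit
    rw [(hinv z.1 z.2).unit_spec] at hct
    exact hct.comp z (contDiff_const.sub (contDiff_const.mul cdE)).contDiffAt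
  have cdF : ContDiff ℝ (⊤ : ℕ∞) (fun z : ℝ × ℝ =>
      U * mE S z.1 z.2 * Ring.inverse (1 - K * mE S z.1 z.2) * V) := by
    have h := (((sandL U V).toContinuousLinearMap.restrictScalars ℝ).contDiff).comp
      (cdE.mul cdInv)
    have hfun : (fun z : ℝ × ℝ => U * mE S z.1 z.2 * Ring.inverse (1 - K * mE S z.1 z.2) * V)
        = fun z : ℝ × ℝ => ((sandL U V).toContinuousLinearMap.restrictScalars ℝ)
            (mE S z.1 z.2 * Ring.inverse (1 - K * mE S z.1 z.2)) := by
      funext z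
      simp [sandL, Matrix.mul_assoc]
    rw [hfun]
    exact h
  let P : Matrix (Fin m) (Fin m) ℂ →ₗ[ℂ] ℂ :=
    (LinearMap.proj j : (Fin m → ℂ) →ₗ[ℂ] ℂ).comp
      (LinearMap.proj i : Matrix (Fin m) (Fin m) ℂ →ₗ[ℂ] (Fin m → ℂ))
  have hP : ContDiff ℝ (⊤ : ℕ∞) (P.toContinuousLinearMap.restrictScalars ℝ :
      Matrix (Fin m) (Fin m) ℂ → ℂ) := (P.toContinuousLinearMap.restrictScalars ℝ).contDiff
  exact hP.comp cdF

end KdVAnalysis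


open Matrix

attribute [local instance] Matrix.normedAddCommGroup Matrix.normedSpace

/-- Partial derivative with respect to the first (space) variable. -/
noncomputable def pdx {α : Type*} [NormedAddCommGroup α] [NormedSpace ℝ α]
    (f : ℝ → ℝ → α) : ℝ → ℝ → α :=
  fun x t => deriv (fun y => f y t) x

/-- Partial derivative with respect to the second (time) variable. -/
noncomputable def pdt {α : Type*} [NormedAddCommGroup α] [NormedSpace ℝ α]
    (f : ℝ → ℝ → α) : ℝ → ℝ → α :=
  fun x t => deriv (fun s => f x s) t

/-- Solutions of the matrix KdV equation from a Sylvester equation. -/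
theorem matrix_KdV_solutions
    {n m : ℕ}
    (S : Matrix (Fin n) (Fin n) ℂ)
    (U : Matrix (Fin m) (Fin n) ℂ) (V : Matrix (Fin n) (Fin m) ℂ)
    (K : Matrix (Fin n) (Fin n) ℂ)
    (hSyl : S * K + K * S = V * U)
    (Ξ : ℝ → ℝ → Matrix (Fin n) (Fin n) ℂ)
    (hΞ : ∀ x t : ℝ,
      Ξ x t = NormedSpace.exp ((-2 : ℂ) • ((x : ℂ) • S + (t : ℂ) • (S * S * S))))
    (hinv : ∀ x t : ℝ, IsUnit (1 - K * Ξ x t))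
    (φ : ℝ → ℝ → Matrix (Fin m) (Fin m) ℂ)
    (hφ : ∀ x t : ℝ, φ x t = U * Ξ x t * (1 - K * Ξ x t)⁻¹ * V)
    (u : ℝ → ℝ → Matrix (Fin m) (Fin m) ℂ)
    (hu : ∀ x t : ℝ, u x t = pdx φ x t) :
    ContDiff ℝ (⊤ : ℕ∞) (fun z : ℝ × ℝ => φ z.1 z.2) ∧
    (∀ x t : ℝ,
      pdt u x t - (1 / 4 : ℂ) • pdx (pdx (pdx u)) x t
        - (3 / 2 : ℂ) • pdx (fun y s => u y s * u y s) x t = 0) := by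
  classical
  have hXi : ∀ x t : ℝ, Ξ x t = mE S x t := fun x t => (hΞ x t).trans (mE_eq S x t)
  have hinv' : ∀ x t : ℝ, IsUnit (1 - K * mE S x t) := fun x t => hXi x t ▸ hinv x t
  have htrans : ∀ {p : ℕ} {f : ℝ → Matrix (Fin p) (Fin p) ℂ}
      {D : Matrix (Fin p) (Fin p) ℂ} {x₀ : ℝ},
      Filter.Tendsto (slope f x₀) (nhdsWithin x₀ {x₀}ᶜ) (nhds D) → HasDerivAt f D x₀ :=
    fun h => hasDerivAt_iff_tendsto_slope.mpr h
  constructor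
  · have hphi_fun : (fun z : ℝ × ℝ => φ z.1 z.2) = fun z : ℝ × ℝ =>
        U * mE S z.1 z.2 * Ring.inverse (1 - K * mE S z.1 z.2) * V := by
      funext z
      rw [hφ, hXi, Matrix.nonsing_inv_eq_ringInverse]
    rw [hphi_fun]
    exact contDiff_pi.mpr fun i => contDiff_pi.mpr fun j => contDiff_entries S U V K hinv' i j
  · intro x t
    have hpdxφ : ∀ x t : ℝ, pdx φ x t = U * (mW S K x t * mA S * (mW S K x t * mE S x t)) * V := by
      intro x t
      have hfun : (fun y : ℝ => φ y t) = fun y : ℝ => U * (mW S K y t * mE S y t) * V := by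
        funext y
        rw [hφ, hXi, Matrix.nonsing_inv_eq_ringInverse, Matrix.mul_assoc U,
          em_eq_we S K hinv' y t]
      simp only [pdx]
      rw [hfun]
      exact (htrans (slope_phi S U V K hinv' x t)).deriv
    have hufun : ∀ x t : ℝ, u x t = U * (mW S K x t * mA S * (mW S K x t * mE S x t)) * V := fun x t =>
      (hu x t).trans (hpdxφ x t)
    have hpdtu : pdt u x t = U * (mW S K x t * (mB S * mE S x t * K) * mW S K x t * mA S * (mW S K x t * mE S x t) + mW S K x t * mA S * (mW S K x t * (mB S * mE S x t * K) * mW S K x t * mE S x t + mW S K x t * (mB S * mE S x t))) * V := by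
      simp only [pdt]
      rw [show (fun s : ℝ => u x s) = fun s : ℝ => U * (mW S K x s * mA S * (mW S K x s * mE S x s)) * V from
        funext fun s => hufun x s]
      exact (htrans (slope_c1_t S U V K hinv' x t)).deriv
    have hpdxu : ∀ x t : ℝ, pdx u x t = U * (2 * (mW S K x t * mA S * (mW S K x t * mA S * (mW S K x t * mE S x t))) - mW S K x t * (mA S * mA S) * (mW S K x t * mE S x t)) * V := by
      intro x t
      simp only [pdx]
      rw [show (fun y : ℝ => u y t) = fun y : ℝ => U * (mW S K y t * mA S * (mW S K y t * mE S y t)) * V from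
        funext fun y => hufun y t]
      exact (htrans (slope_c1 S U V K hinv' x t)).deriv
    have hpdxxu : ∀ x t : ℝ, pdx (pdx u) x t = U * (6 * (mW S K x t * mA S * (mW S K x t * mA S * (mW S K x t * mA S * (mW S K x t * mE S x t)))) - 3 * (mW S K x t * (mA S * mA S) * (mW S K x t * mA S * (mW S K x t * mE S x t))) - 3 * (mW S K x t * mA S * (mW S K x t * (mA S * mA S) * (mW S K x t * mE S x t))) + mW S K x t * (mA S * mA S * mA S) * (mW S K x t * mE S x t)) * V := by
      intro x t
      change deriv (fun y : ℝ => pdx u y t) x = _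
      rw [show (fun y : ℝ => pdx u y t) = fun y : ℝ => U * (2 * (mW S K y t * mA S * (mW S K y t * mA S * (mW S K y t * mE S y t))) - mW S K y t * (mA S * mA S) * (mW S K y t * mE S y t)) * V from
        funext fun y => hpdxu y t]
      exact (htrans (slope_c2 S U V K hinv' x t)).deriv
    have hpdxxxu : pdx (pdx (pdx u)) x t = U * (24 * (mW S K x t * mA S * (mW S K x t * mA S * (mW S K x t * mA S * (mW S K x t * mA S * (mW S K x t * mE S x t))))) - 12 * (mW S K x t * (mA S * mA S) * (mW S K x t * mA S * (mW S K x t * mA S * (mW S K x t * mE S x t)))) - 12 * (mW S K x t * mA S * (mW S K x t * (mA S * mA S) * (mW S K x t * mA S * (mW S K x t * mE S x t)))) - 12 * (mW S K x t * mA S * (mW S K x t * mA S * (mW S K x t * (mA S * mA S) * (mW S K x t * mE S x t)))) + 6 * (mW S K x t * (mA S * mA S) * (mW S K x t * (mA S * mA S) * (mW S K x t * mE S x t))) + 4 * (mW S K x t * (mA S * mA S * mA S) * (mW S K x t * mA S * (mW S K x t * mE S x t))) + 4 * (mW S K x t * mA S * (mW S K x t * (mA S * mA S * mA S) * (mW S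 K x t * mE S x t))) - mW S K x t * (mA S * mA S * mA S * mA S) * (mW S K x t * mE S x t)) * V := by
      change deriv (fun y : ℝ => pdx (pdx u) y t) x = _
      rw [show (fun y : ℝ => pdx (pdx u) y t) = fun y : ℝ => U * (6 * (mW S K y t * mA S * (mW S K y t * mA S * (mW S K y t * mA S * (mW S K y t * mE S y t)))) - 3 * (mW S K y t * (mA S * mA S) * (mW S K y t * mA S * (mW S K y t * mE S y t))) - 3 * (mW S K y t * mA S * (mW S K y t * (mA S * mA S) * (mW S K y t * mE S y t))) + mW S K y t * (mA S * mA S * mA S) * (mW S K y t * mE S y t)) * V from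
        funext fun y => hpdxxu y t]
      exact (htrans (slope_c3 S U V K hinv' x t)).deriv
    have hpdsq : pdx (fun y s => u y s * u y s) x t
        = (U * (2 * (mW S K x t * mA S * (mW S K x t * mA S * (mW S K x t * mE S x t))) - mW S K x t * (mA S * mA S) * (mW S K x t * mE S x t)) * V) * (U * (mW S K x t * mA S * (mW S K x t * mE S x t)) * V)
          + (U * (mW S K x t * mA S * (mW S K x t * mE S x t)) * V) * (U * (2 * (mW S K x t * mA S * (mW S K x t * mA S * (mW S K x t * mE S x t))) - mW S K x t * (mA S * mA S) * (mW S K x t * mE S x t)) * V) := by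
      simp only [pdx]
      rw [show (fun y : ℝ => u y t * u y t)
          = fun y : ℝ => (U * (mW S K y t * mA S * (mW S K y t * mE S y t)) * V) * (U * (mW S K y t * mA S * (mW S K y t * mE S y t)) * V) from
        funext fun y => by rw [hufun y t]]
      exact (htrans (slope_sq S U V K hinv' x t)).deriv
    rw [hpdtu, hpdxxxu, hpdsq]
    have hsand : ∀ X Y : Matrix (Fin n) (Fin n) ℂ,
        (U * X * V) * (U * Y * V) = U * (X * (V * U) * Y) * V := fun X Y => by
      simp only [Matrix.mul_assoc]
    rw [hsand, hsand]
    have habs : ∀ M : Matrix (Fin m) (Fin m) ℂ, (4:ℂ) • M = 0 → M = 0 := by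
      intro M h
      have h2 := congrArg (fun N : Matrix (Fin m) (Fin m) ℂ => (4⁻¹:ℂ) • N) h
      simp only [smul_smul, smul_zero] at h2
      norm_num at h2
      exact h2
    refine habs _ ?_
    have hpush : ∀ (c : ℂ) (X : Matrix (Fin n) (Fin n) ℂ),
        c • (U * X * V) = U * (c • X) * V := fun c X =>
      (by rw [Matrix.mul_smul, Matrix.smul_mul] :
        U * (c • X) * V = c • (U * X * V)).symm
    have hnum4 : ∀ X : Matrix (Fin n) (Fin n) ℂ, (4:ℂ) • X = 4 * X := fun X => by
      rw [Algebra.smul_def, map_ofNat]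
    have hnum6 : ∀ X : Matrix (Fin n) (Fin n) ℂ, (6:ℂ) • X = 6 * X := fun X => by
      rw [Algebra.smul_def, map_ofNat]
    rw [smul_sub, smul_sub, smul_smul, smul_smul,
      show (4:ℂ) * (1 / 4) = 1 from by norm_num, one_smul,
      show (4:ℂ) * (3 / 2) = 6 from by norm_num, smul_add]
    rw [hpush, hpush, hpush, hnum4, hnum6, hnum6]
    have hcollect : ∀ P Q R T : Matrix (Fin n) (Fin n) ℂ,
        U * (4 * P) * V - U * Q * V - (U * (6 * R) * V + U * (6 * T) * V)
          = U * (4 * P - Q - 6 * (R + T)) * V := fun P Q R T => by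
      simp only [mul_add, Matrix.mul_sub, Matrix.sub_mul, Matrix.mul_add, Matrix.add_mul]
    rw [hcollect]
    have hz : mA S * K + K * mA S + 2 * (V * U) = 0 := by
      have h1 : mA S * K + K * mA S = (-2:ℂ) • (S * K + K * S) := by
        unfold mA
        rw [smul_mul_assoc, mul_smul_comm, smul_add]
      have h2 : (2 : Matrix (Fin n) (Fin n) ℂ) * (V * U) = (2:ℂ) • (V * U) := by
        rw [Algebra.smul_def, map_ofNat]
      rw [h1, hSyl, h2, ← add_smul]
      norm_num
    have hb : mA S * mA S * mA S - 4 * mB S = 0 := by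
      have h4 : (4 : Matrix (Fin n) (Fin n) ℂ) * mB S = (4:ℂ) • mB S := by
        rw [Algebra.smul_def, map_ofNat]
      rw [h4]
      unfold mA mB
      simp only [smul_mul_assoc, mul_smul_comm, smul_smul]
      norm_num
    rw [kdv_final (mA S) (mB S) (mE S x t) K (mW S K x t) (V * U)
      (commAE S x t).eq (h3fact S K hinv' x t) (h4fact S K hinv' x t) hz hb]
    simp
end

section
/- Let S be an invertible n×n, U an m×n, and V an n×m complex matrix, and suppose the n×n matrix K satisfies S⁻¹ K − K S = V U. For x ∈ ℤ and t ∈ ℝ set Ξ(x,t) = Sˣ · exp(−t (S − S⁻¹)), and assume that I + (Ξ(x,t) K)² is invertible for all (x,t) ∈ ℤ×ℝ. Then 𝒱 = −U (I + (Ξ K)²)⁻¹ Ξ V satisfies the m×m matrix semi-discrete modified KdV equation 𝒱̇ + 𝒱⁺ (I + 𝒱²) − (I + 𝒱²) 𝒱⁻ = 0, where 𝒱⁺(x,t) = 𝒱(x+1,t), 𝒱⁻(x,t) = 𝒱(x−1,t), and 𝒱̇ is the partial derivative with respect to t. -/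
/-!
Write `L = Ξ K`, `W = (I + L²)⁻¹` and `D = S - S⁻¹`. Because `Sˣ` commutes with `S` and `S⁻¹`, the
shifts act by `Ξ (x ± 1) = S^{±1} Ξ x` and time by `∂ₜ Ξ = -D Ξ`, and the Sylvester equation becomes
`N = S⁻¹ L - L S` for `N = Ξ V U`. All terms of the equation then have the form `U (⋯) Ξ V`: moving
the factors `Ξ V U` inwards, `𝒱(x+1) (I + 𝒱²)` becomes `-U (S W + L W N W) Ξ V`,
`(I + 𝒱²) 𝒱(x-1)` becomes `-U (W S⁻¹ - W N W L) Ξ V`, and `𝒱̇ = U (W D - W (D L² + L D L) W) Ξ V`,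
whose bracket is the difference of the other two. These three reductions are identities in the
free ring modulo `S S⁻¹ = S⁻¹ S = 1` and the inverse relations of `W`, `(I + (S L)²)⁻¹` and
`(I + (S⁻¹ L)²)⁻¹`.
-/

open Matrix

attribute [local instance] Matrix.normedAddCommGroup Matrix.normedSpace

section Calculus

variable {𝕜 : Type*} [NontriviallyNormedField 𝕜]
  {A : Type*} [NormedRing A] [NormedAlgebra 𝕜 A] [HasSummableGeomSeries A]

theorem HasDerivAt.ringInverse {f : 𝕜 → A} {f' : A} {t : 𝕜} (hf : HasDerivAt f f' t)
    (hu : IsUnit (f t)) :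
    HasDerivAt (fun s => Ring.inverse (f s)) (-(Ring.inverse (f t) * f' * Ring.inverse (f t))) t := by
  obtain ⟨u, hu⟩ := hu
  have hl : HasFDerivAt Ring.inverse (-ContinuousLinearMap.mulLeftRight 𝕜 A ↑u⁻¹ ↑u⁻¹) (f t) :=
    hu ▸ hasFDerivAt_ringInverse u
  rw [← hu, Ring.inverse_unit]
  simpa [Function.comp_def] using hl.comp_hasDerivAt t hf

theorem HasDerivAt.ringInverse_one_add_sq_mul {f : 𝕜 → A} {D K : A} {t : 𝕜}
    (hf : HasDerivAt f (-(D * f t)) t) (hu : IsUnit (1 + (f t * K) ^ 2)) :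
    HasDerivAt (fun s => Ring.inverse (1 + (f s * K) ^ 2) * f s)
      ((Ring.inverse (1 + (f t * K) ^ 2)
          * (D * (f t * K) * (f t * K) + f t * K * D * (f t * K))
          * Ring.inverse (1 + (f t * K) ^ 2)
        - Ring.inverse (1 + (f t * K) ^ 2) * D) * f t) t := by
  have hL := hf.mul_const K
  have hG : HasDerivAt (fun s => 1 + (f s * K) ^ 2)
      (-(D * f t) * K * (f t * K) + f t * K * (-(D * f t) * K)) t := by
    simpa only [sq, Pi.mul_apply] using (hL.mul hL).const_add 1
  refine ((hG.ringInverse hu).mul hf).congr_deriv ?_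
  noncomm_ring

end Calculus

theorem hasDerivAt_mul_exp_neg_ofReal_smul {A : Type*} [NormedRing A] [NormedAlgebra ℝ A]
    [CompleteSpace A] [Algebra ℂ A] [IsScalarTower ℝ ℂ A] {P D : A} (hPD : Commute P D) (t : ℝ) :
    HasDerivAt (fun s : ℝ => P * NormedSpace.exp ((-(s : ℂ)) • D))
      (-(D * (P * NormedSpace.exp ((-(t : ℂ)) • D)))) t := by
  have hsmul : ∀ s : ℝ, (-(s : ℂ)) • D = s • -D := fun s => by
    rw [neg_smul, smul_neg]; exact congrArg Neg.neg (algebraMap_smul ℂ s D)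
  simp only [hsmul]
  convert (hasDerivAt_exp_smul_const' (-D) t).const_mul P using 1
  rw [← mul_assoc, ← mul_assoc, mul_neg, neg_mul, hPD.eq]

section MatrixCalculus

variable {l m n p : Type*} [Fintype l] [Fintype m] [Fintype n] [Fintype p]

/- The entrywise norm under which `pdt'` is taken is not submultiplicative. Inverses and
exponentials are differentiated for the `L∞` operator norm instead, which induces the same
topology, so that derivatives agree. -/
theorem Matrix.hasDerivAt_linftyOp_iff [DecidableEq n] {f : ℝ → Matrix n n ℂ}
    {f' : Matrix n n ℂ} {t : ℝ} :
    (letI : NormedRing (Matrix n n ℂ) := Matrix.linftyOpNormedRing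
     letI : NormedAlgebra ℝ (Matrix n n ℂ) := Matrix.linftyOpNormedAlgebra
     HasDerivAt f f' t) ↔ HasDerivAt f f' t :=
  hasDerivAt_iff_tendsto_slope.trans hasDerivAt_iff_tendsto_slope.symm

theorem HasDerivAt.matrix_const_mul_mul_const {f : ℝ → Matrix m n ℂ} {f' : Matrix m n ℂ} {t : ℝ}
    (hf : HasDerivAt f f' t) (U : Matrix l m ℂ) (V : Matrix n p ℂ) :
    HasDerivAt (fun s => U * f s * V) (U * f' * V) t :=
  let φ : Matrix m n ℂ →L[ℝ] Matrix l p ℂ :=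
    ⟨(mulRightLinearMap l ℝ V).comp (mulLeftLinearMap n ℝ U),
      (continuous_const.matrix_mul continuous_id).matrix_mul continuous_const⟩
  φ.hasFDerivAt.comp_hasDerivAt t hf

theorem Matrix.commute_zpow_inv {α : Type*} [CommRing α] [DecidableEq n] (S : Matrix n n α)
    (x : ℤ) : Commute (S ^ x) S⁻¹ := by
  simpa only [Matrix.zpow_neg_one] using Commute.zpow_zpow_self S x (-1)

theorem Matrix.hasDerivAt_zpow_mul_exp [DecidableEq n] (S : Matrix n n ℂ) (x : ℤ) (t : ℝ) :
    HasDerivAt (fun s : ℝ => S ^ x * NormedSpace.exp ((-(s : ℂ)) • (S - S⁻¹)))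
      (-((S - S⁻¹) * (S ^ x * NormedSpace.exp ((-(t : ℂ)) • (S - S⁻¹))))) t := by
  let _ : NormedRing (Matrix n n ℂ) := Matrix.linftyOpNormedRing
  let _ : NormedAlgebra ℝ (Matrix n n ℂ) := Matrix.linftyOpNormedAlgebra
  -- instance search would only find completeness for the product uniformity of `Matrix`
  have : @CompleteSpace (Matrix n n ℂ) PseudoMetricSpace.toUniformSpace :=
    FiniteDimensional.complete ℝ _
  exact Matrix.hasDerivAt_linftyOp_iff.mp (hasDerivAt_mul_exp_neg_ofReal_smul
    ((Commute.zpow_self S x).sub_right (S.commute_zpow_inv x)) t)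

end MatrixCalculus

namespace SemidiscreteMKdV

section RingIdentities

variable {R : Type*} [Ring R] {S C L W N : R}

theorem forward_shift_identity (hN : N = C * L - L * S) (hSC : S * C = 1)
    (hW : (1 + L ^ 2) * W = 1) {Wp : R} (hWp : Wp * (1 + (S * L) ^ 2) = 1) :
    Wp * S * (1 + (N * W) ^ 2) = S * W + L * W * N * W := by
  have key : (1 + (S * L) ^ 2) * (S * W + L * W * N * W) = S * (1 + (N * W) ^ 2) :=
    calc _ = S * (1 + (N * W) ^ 2) + S * ((1 + L ^ 2) * W - 1)
          + S * L * S * ((1 + L ^ 2) * W - 1) * N * W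
          + S * L * (S * C - 1) * L * W - (S * C - 1) * L * W * N * W := by
          subst hN; noncomm_ring
      _ = _ := by simp only [hSC, hW, sub_self, mul_zero, zero_mul, add_zero, sub_zero]
  rw [mul_assoc, ← key, ← mul_assoc, hWp, one_mul]

theorem backward_shift_identity (hN : N = C * L - L * S) (hSC : S * C = 1) (hCS : C * S = 1)
    (hW : W * (1 + L ^ 2) = 1) {Wm : R} (hWm : (1 + (C * L) ^ 2) * Wm = 1) :
    (1 + (W * N) ^ 2) * Wm * C = W * C - W * N * W * L := by
  have key : (W * C - W * N * W * L) * S * (1 + (C * L) ^ 2) = 1 + (W * N) ^ 2 :=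
    calc _ = 1 + (W * N) ^ 2 + (W * (1 + L ^ 2) - 1) + W * L * (S * C - 1) * L
          + W * (C * S - 1) * (1 + (C * L) ^ 2) - W * N * (W * (1 + L ^ 2) - 1) * C * L
          - W * N * W * L * (S * C - 1) * L * C * L := by
          subst hN; noncomm_ring
      _ = _ := by simp only [hSC, hCS, hW, sub_self, mul_zero, zero_mul, add_zero, sub_zero]
  rw [← key, mul_assoc _ _ Wm, hWm, mul_one, mul_assoc, hSC, mul_one]

theorem derivative_identity (hN : N = C * L - L * S) (hW : (1 + L ^ 2) * W = 1)
    (hW' : W * (1 + L ^ 2) = 1) :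
    W * (S - C) - W * ((S - C) * L * L + L * (S - C) * L) * W
      = S * W + L * W * N * W - (W * C - W * N * W * L) := by
  rw [← sub_eq_zero]
  calc _ = -W * (S - C) * ((1 + L ^ 2) * W - 1) + (W * (1 + L ^ 2) - 1) * S * W
        - W * L * ((1 + L ^ 2) * W - 1) * N * W + (W * (1 + L ^ 2) - 1) * L * W * N * W
        - W * C * ((1 + L ^ 2) * W - 1) - W * N * (W * (1 + L ^ 2) - 1) * L * W
        + W * N * W * L * ((1 + L ^ 2) * W - 1) := by
        subst hN; noncomm_ring
    _ = 0 := by simp only [hW, hW', sub_self, mul_zero, zero_mul, add_zero]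

end RingIdentities

variable {α : Type*} [CommRing α] {m n : Type*} [Fintype n] [DecidableEq n]

noncomputable def potential (U : Matrix m n α) (K : Matrix n n α) (V : Matrix n m α)
    (Y : Matrix n n α) : Matrix m m α :=
  -(U * (1 + (Y * K) ^ 2)⁻¹ * Y * V)

theorem potential_equation [Fintype m] [DecidableEq m] {S X K : Matrix n n α}
    {U : Matrix m n α} {V : Matrix n m α}
    (hS : IsUnit S) (hSyl : S⁻¹ * K - K * S = V * U) (hXS : Commute X S⁻¹)
    (hX : IsUnit (1 + (X * K) ^ 2)) (hSX : IsUnit (1 + (S * X * K) ^ 2))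
    (hSinvX : IsUnit (1 + (S⁻¹ * X * K) ^ 2)) :
    U * ((1 + (X * K) ^ 2)⁻¹ * (S - S⁻¹)
        - (1 + (X * K) ^ 2)⁻¹ * ((S - S⁻¹) * (X * K) * (X * K) + X * K * (S - S⁻¹) * (X * K))
          * (1 + (X * K) ^ 2)⁻¹) * X * V
      + potential U K V (S * X) * (1 + potential U K V X * potential U K V X)
      - (1 + potential U K V X * potential U K V X) * potential U K V (S⁻¹ * X) = 0 := by
  rw [mul_assoc] at hSX hSinvX
  have hSdet := (isUnit_iff_isUnit_det S).mp hS
  have hXdet := (isUnit_iff_isUnit_det _).mp hX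
  have hN : X * V * U = S⁻¹ * (X * K) - X * K * S := by
    rw [Matrix.mul_assoc, ← hSyl, mul_sub, ← mul_assoc, hXS.eq, mul_assoc, mul_assoc]
  have hfwd := forward_shift_identity hN (mul_nonsing_inv S hSdet) (mul_nonsing_inv _ hXdet)
    (nonsing_inv_mul _ ((isUnit_iff_isUnit_det _).mp hSX))
  have hbwd := backward_shift_identity hN (mul_nonsing_inv S hSdet) (nonsing_inv_mul S hSdet)
    (nonsing_inv_mul _ hXdet) (mul_nonsing_inv _ ((isUnit_iff_isUnit_det _).mp hSinvX))
  rw [derivative_identity hN (mul_nonsing_inv _ hXdet) (nonsing_inv_mul _ hXdet), ← hfwd, ← hbwd]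
  simp only [potential, mul_assoc S, mul_assoc S⁻¹, sq, Matrix.mul_add, Matrix.add_mul,
    Matrix.mul_sub, Matrix.sub_mul, Matrix.mul_neg, Matrix.neg_mul, Matrix.mul_one,
    Matrix.one_mul, Matrix.mul_assoc, neg_neg]
  abel

theorem hasDerivAt_potential [Fintype m] {Ξ : ℝ → Matrix n n ℂ} {D : Matrix n n ℂ} {t : ℝ}
    (U : Matrix m n ℂ) (K : Matrix n n ℂ) (V : Matrix n m ℂ)
    (hΞ : HasDerivAt Ξ (-(D * Ξ t)) t) (hu : IsUnit (1 + (Ξ t * K) ^ 2)) :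
    HasDerivAt (fun s => potential U K V (Ξ s))
      (U * ((1 + (Ξ t * K) ^ 2)⁻¹ * D
        - (1 + (Ξ t * K) ^ 2)⁻¹ * (D * (Ξ t * K) * (Ξ t * K) + Ξ t * K * D * (Ξ t * K))
          * (1 + (Ξ t * K) ^ 2)⁻¹) * Ξ t * V) t := by
  set L := Ξ t * K
  set W := (1 + L ^ 2)⁻¹
  have hWΞ : HasDerivAt (fun s => (1 + (Ξ s * K) ^ 2)⁻¹ * Ξ s)
      ((W * (D * L * L + L * D * L) * W - W * D) * Ξ t) t := by
    let _ : NormedRing (Matrix n n ℂ) := Matrix.linftyOpNormedRing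
    let _ : NormedAlgebra ℝ (Matrix n n ℂ) := Matrix.linftyOpNormedAlgebra
    have : @CompleteSpace (Matrix n n ℂ) PseudoMetricSpace.toUniformSpace :=
      FiniteDimensional.complete ℝ _
    simpa only [← Matrix.nonsing_inv_eq_ringInverse] using Matrix.hasDerivAt_linftyOp_iff.mp
      ((Matrix.hasDerivAt_linftyOp_iff.mpr hΞ).ringInverse_one_add_sq_mul hu)
  have hfun : (fun s => potential U K V (Ξ s))
      = fun s => -(U * ((1 + (Ξ s * K) ^ 2)⁻¹ * Ξ s) * V) :=
    funext fun s => by simp only [potential, Matrix.mul_assoc]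
  rw [hfun]
  refine (hWΞ.matrix_const_mul_mul_const U V).neg.congr_deriv ?_
  simp only [Matrix.mul_sub, Matrix.sub_mul, Matrix.mul_assoc, neg_sub]

end SemidiscreteMKdV

/-- Solutions of the matrix semi-discrete modified KdV equation from a
Sylvester equation. -/
theorem matrix_semidiscrete_mKdV_solutions
    {n m : ℕ}
    (S : Matrix (Fin n) (Fin n) ℂ) (hS : IsUnit S)
    (U : Matrix (Fin m) (Fin n) ℂ) (V : Matrix (Fin n) (Fin m) ℂ)
    (K : Matrix (Fin n) (Fin n) ℂ)
    (hSyl : S⁻¹ * K - K * S = V * U)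
    (Ξ : ℤ → ℝ → Matrix (Fin n) (Fin n) ℂ)
    (hΞ : ∀ (x : ℤ) (t : ℝ),
      Ξ x t = S ^ x * NormedSpace.exp ((-(t : ℂ)) • (S - S⁻¹)))
    (hinv : ∀ (x : ℤ) (t : ℝ), IsUnit (1 + (Ξ x t * K) ^ 2))
    (𝒱 : ℤ → ℝ → Matrix (Fin m) (Fin m) ℂ)
    (h𝒱 : ∀ (x : ℤ) (t : ℝ),
      𝒱 x t = -(U * (1 + (Ξ x t * K) ^ 2)⁻¹ * Ξ x t * V)) :
    ∀ (x : ℤ) (t : ℝ),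
      pdt' 𝒱 x t + 𝒱 (x + 1) t * (1 + 𝒱 x t * 𝒱 x t)
        - (1 + 𝒱 x t * 𝒱 x t) * 𝒱 (x - 1) t = 0 := by
  intro x t
  have hshift : ∀ k : ℤ, Ξ (x + k) t = S ^ k * Ξ x t := fun k => by
    rw [hΞ, hΞ, add_comm, Matrix.zpow_add ((isUnit_iff_isUnit_det S).mp hS), mul_assoc]
  have hΞt : HasDerivAt (fun s => Ξ x s) (-((S - S⁻¹) * Ξ x t)) t := by
    simpa only [← hΞ] using Matrix.hasDerivAt_zpow_mul_exp S x t
  have hΞS : Commute (Ξ x t) S⁻¹ := by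
    have hSS : Commute S S⁻¹ := by simpa only [zpow_one] using S.commute_zpow_inv 1
    rw [hΞ]
    exact (S.commute_zpow_inv x).mul_left
      ((hSS.sub_left (Commute.refl S⁻¹)).smul_left _).exp_left
  have h𝒱' : ∀ x s, 𝒱 x s = SemidiscreteMKdV.potential U K V (Ξ x s) := h𝒱
  simp only [pdt', h𝒱']
  rw [(SemidiscreteMKdV.hasDerivAt_potential U K V hΞt (hinv x t)).deriv, sub_eq_add_neg x,
    hshift, hshift, zpow_one, Matrix.zpow_neg_one]
  refine SemidiscreteMKdV.potential_equation hS hSyl hΞS (hinv x t) ?_ ?_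
  · simpa only [hshift, zpow_one] using hinv (x + 1) t
  · simpa only [hshift, Matrix.zpow_neg_one] using hinv (x + -1) t
end
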